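/- arXiv:2303.00375 — 6 statements merged into one kernel-verified Lean document; each statement's English description precedes it below -/
import Mathlib

section
/- For all integers q ≥ r ≥ 2 and every real number γ ≥ 1 with ⌈q/γ⌉ ≥ r, one has liminf_{q'→∞} t_r(q', ⌈q'/γ⌉) ≥ t_r(q, ⌈q/γ⌉). -/
open Filter

/-- An r-uniform hypergraph `G` on vertex set `Fin n` has the (q,p)-property if every
q-element vertex subset `A` contains a p-element subset `B` such that every
r-element subset of `B` is an edge of `G`. -/
def HasLocalProperty {n : ℕ} (G : Finset (Finset (Fin n))) (r q p : ℕ) : Prop :=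
  ∀ A : Finset (Fin n), A.card = q →
    ∃ B ⊆ A, B.card = p ∧ ∀ e ⊆ B, e.card = r → e ∈ G

/-- `minEdges r n q p` = T_r(n,q,p): the minimum number of edges of an n-vertex
r-uniform hypergraph having the (q,p)-property. -/
noncomputable def minEdges (r n q p : ℕ) : ℕ :=
  sInf {m | ∃ G : Finset (Finset (Fin n)), (∀ e ∈ G, e.card = r) ∧
    HasLocalProperty G r q p ∧ G.card = m}

/-- `tDensity r q p` = t_r(q,p) = lim_{n→∞} T_r(n,q,p)/C(n,r), which equals the
supremum since the sequence is nondecreasing and bounded. -/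
noncomputable def tDensity (r q p : ℕ) : ℝ :=
  ⨆ n : ℕ, (minEdges r n q p : ℝ) / (n.choose r)

lemma complete_hasLocalProperty (r n q p : ℕ) (hpq : p ≤ q) :
    HasLocalProperty ((Finset.univ : Finset (Fin n)).powersetCard r) r q p := by
  intro A hA
  obtain ⟨B, hBA, hB⟩ := Finset.exists_subset_card_eq (hA ▸ hpq)
  exact ⟨B, hBA, hB, fun e _ he => Finset.mem_powersetCard.2 ⟨Finset.subset_univ _, he⟩⟩

lemma minSet_nonempty (r n q p : ℕ) (hpq : p ≤ q) :
    {m | ∃ G : Finset (Finset (Fin n)), (∀ e ∈ G, e.card = r) ∧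
      HasLocalProperty G r q p ∧ G.card = m}.Nonempty :=
  ⟨_, _, fun e he => (Finset.mem_powersetCard.1 he).2, complete_hasLocalProperty r n q p hpq, rfl⟩

lemma exists_min_graph (r n q p : ℕ) (hpq : p ≤ q) :
    ∃ G : Finset (Finset (Fin n)), (∀ e ∈ G, e.card = r) ∧
      HasLocalProperty G r q p ∧ G.card = minEdges r n q p :=
  Nat.sInf_mem (minSet_nonempty r n q p hpq)

lemma minEdges_le (r n q p : ℕ) {G : Finset (Finset (Fin n))}
    (h1 : ∀ e ∈ G, e.card = r) (h2 : HasLocalProperty G r q p) :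
    minEdges r n q p ≤ G.card :=
  Nat.sInf_le ⟨G, h1, h2, rfl⟩

lemma minEdges_le_choose (r n q p : ℕ) (hpq : p ≤ q) :
    minEdges r n q p ≤ n.choose r := by
  have := minEdges_le r n q p (fun e he => (Finset.mem_powersetCard.1 he).2)
    (complete_hasLocalProperty r n q p hpq)
  simpa [Finset.card_powersetCard] using this
lemma minEdges_le_filter {r q p m n : ℕ} {G : Finset (Finset (Fin n))}
    (S : Finset (Fin n)) (hS : S.card = m)
    (hgood : ∀ A ⊆ S, A.card = q → ∃ B ⊆ A, B.card = p ∧ ∀ e ⊆ B, e.card = r → e ∈ G) :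
    minEdges r m q p ≤ (G.filter (· ⊆ S)).card := by
  set f : Fin m → Fin n := fun i => ((S.orderIsoOfFin hS) i : Fin n) with hf
  have hinj : Function.Injective f := fun a b h => by
    have := (S.orderIsoOfFin hS).injective (Subtype.ext h); exact this
  have hmem : ∀ i, f i ∈ S := fun i => ((S.orderIsoOfFin hS) i).2
  set G' : Finset (Finset (Fin m)) :=
    ((Finset.univ : Finset (Fin m)).powersetCard r).filter (fun e => e.image f ∈ G) with hG'
  have hunif : ∀ e ∈ G', e.card = r := fun e he =>
    (Finset.mem_powersetCard.1 (Finset.mem_filter.1 he).1).2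
  have hprop : HasLocalProperty G' r q p := by
    intro A hA
    have hAS : A.image f ⊆ S := fun x hx => by
      obtain ⟨a, _, rfl⟩ := Finset.mem_image.1 hx; exact hmem a
    have hAcard : (A.image f).card = q := by rw [Finset.card_image_of_injective _ hinj, hA]
    obtain ⟨B, hBA, hBcard, hBcomp⟩ := hgood (A.image f) hAS hAcard
    refine ⟨A.filter (fun x => f x ∈ B), Finset.filter_subset _ _, ?_, ?_⟩
    · have himg : (A.filter (fun x => f x ∈ B)).image f = B := by
        apply Finset.Subset.antisymm
        · intro b hb
          obtain ⟨a, ha, rfl⟩ := Finset.mem_image.1 hb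
          exact (Finset.mem_filter.1 ha).2
        · intro b hb
          obtain ⟨a, ha, rfl⟩ := Finset.mem_image.1 (hBA hb)
          exact Finset.mem_image.2 ⟨a, Finset.mem_filter.2 ⟨ha, hb⟩, rfl⟩
      calc (A.filter (fun x => f x ∈ B)).card
          = ((A.filter (fun x => f x ∈ B)).image f).card :=
            (Finset.card_image_of_injective _ hinj).symm
        _ = p := by rw [himg, hBcard]
    · intro e he her
      refine Finset.mem_filter.2 ⟨Finset.mem_powersetCard.2 ⟨Finset.subset_univ _, her⟩, ?_⟩
      apply hBcomp
      · intro x hx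
        obtain ⟨a, ha, rfl⟩ := Finset.mem_image.1 hx
        exact (Finset.mem_filter.1 (he ha)).2
      · rw [Finset.card_image_of_injective _ hinj, her]
  refine (minEdges_le r m q p hunif hprop).trans ?_
  apply Finset.card_le_card_of_injOn (fun e => e.image f)
  · intro e he
    refine Finset.mem_filter.2 ⟨(Finset.mem_filter.1 he).2, ?_⟩
    intro x hx
    obtain ⟨a, _, rfl⟩ := Finset.mem_image.1 hx; exact hmem a
  · intro a _ b _ h
    exact Finset.image_injective hinj h

lemma card_supersets {n m r : ℕ} (hrm : r ≤ m) (e : Finset (Fin n)) (he : e.card = r) :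
    (((Finset.univ : Finset (Fin n)).powersetCard m).filter (fun S => e ⊆ S)).card
      = (n - r).choose (m - r) := by
  have key : (((Finset.univ : Finset (Fin n)).powersetCard m).filter (fun S => e ⊆ S)).card
      = ((Finset.univ \ e).powersetCard (m - r)).card := by
    apply Finset.card_nbij' (fun S => S \ e) (fun T => T ∪ e)
    · intro S hS
      obtain ⟨hS1, hS2⟩ := Finset.mem_filter.1 hS
      have := (Finset.mem_powersetCard.1 hS1).2
      refine Finset.mem_powersetCard.2 ⟨fun x hx => ?_, ?_⟩
      · simp only [Finset.mem_sdiff] at hx ⊢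
        exact ⟨Finset.mem_univ _, hx.2⟩
      · rw [Finset.card_sdiff_of_subset hS2, this, he]
    · intro T hT
      obtain ⟨hT1, hT2⟩ := Finset.mem_powersetCard.1 hT
      have hdisj : Disjoint T e := by
        refine Finset.disjoint_left.2 fun x hx => ?_
        have := hT1 hx; simp only [Finset.mem_sdiff] at this; exact this.2
      refine Finset.mem_filter.2 ⟨Finset.mem_powersetCard.2 ⟨Finset.subset_univ _, ?_⟩,
        Finset.subset_union_right⟩
      rw [Finset.card_union_of_disjoint hdisj, hT2, he]
      omega
    · intro S hS
      obtain ⟨hS1, hS2⟩ := Finset.mem_filter.1 hS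
      show S \ e ∪ e = S
      rw [Finset.sdiff_union_self_eq_union, Finset.union_eq_left.2 hS2]
    · intro T hT
      obtain ⟨hT1, hT2⟩ := Finset.mem_powersetCard.1 hT
      have hdisj : Disjoint T e := by
        refine Finset.disjoint_left.2 fun x hx => ?_
        have := hT1 hx; simp only [Finset.mem_sdiff] at this; exact this.2
      show (T ∪ e) \ e = T
      rw [Finset.union_sdiff_right, Finset.sdiff_eq_self_of_disjoint hdisj]
  rw [key, Finset.card_powersetCard, Finset.card_sdiff_of_subset (Finset.subset_univ _),
    Finset.card_univ, Fintype.card_fin, he]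

lemma count_ineq (r q p m n : ℕ) (hpq : p ≤ q) (hrm : r ≤ m) (hmn : m ≤ n) :
    n.choose m * minEdges r m q p ≤ minEdges r n q p * (n - r).choose (m - r) := by
  obtain ⟨G, hG1, hG2, hG3⟩ := exists_min_graph r n q p hpq
  have hsum1 : n.choose m * minEdges r m q p ≤
      ∑ S ∈ (Finset.univ : Finset (Fin n)).powersetCard m, (G.filter (· ⊆ S)).card := by
    have hle : ∀ S ∈ (Finset.univ : Finset (Fin n)).powersetCard m,
        minEdges r m q p ≤ (G.filter (· ⊆ S)).card := fun S hS =>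
      minEdges_le_filter S (Finset.mem_powersetCard.1 hS).2 (fun A _ hA => hG2 A hA)
    calc n.choose m * minEdges r m q p
        = ∑ _S ∈ (Finset.univ : Finset (Fin n)).powersetCard m, minEdges r m q p := by
          rw [Finset.sum_const, Finset.card_powersetCard, Finset.card_univ, Fintype.card_fin,
            smul_eq_mul]
      _ ≤ _ := Finset.sum_le_sum hle
  have hsum2 : ∑ S ∈ (Finset.univ : Finset (Fin n)).powersetCard m, (G.filter (· ⊆ S)).card
      = minEdges r n q p * (n - r).choose (m - r) := by
    calc ∑ S ∈ (Finset.univ : Finset (Fin n)).powersetCard m, (G.filter (· ⊆ S)).card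
        = ∑ S ∈ (Finset.univ : Finset (Fin n)).powersetCard m,
            ∑ e ∈ G, if e ⊆ S then 1 else 0 := by
          refine Finset.sum_congr rfl fun S _ => ?_
          rw [Finset.card_filter]
      _ = ∑ e ∈ G, ∑ S ∈ (Finset.univ : Finset (Fin n)).powersetCard m,
            if e ⊆ S then 1 else 0 := Finset.sum_comm
      _ = ∑ e ∈ G, (n - r).choose (m - r) := by
          refine Finset.sum_congr rfl fun e he => ?_
          rw [← Finset.card_filter]
          exact card_supersets hrm e (hG1 e he)
      _ = minEdges r n q p * (n - r).choose (m - r) := by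
          rw [Finset.sum_const, hG3, smul_eq_mul]
  omega

lemma density_mono (r q p : ℕ) (hpq : p ≤ q) {m n : ℕ} (hrm : r ≤ m) (hmn : m ≤ n) :
    (minEdges r m q p : ℝ) / (m.choose r) ≤ (minEdges r n q p : ℝ) / (n.choose r) := by
  have h := count_ineq r q p m n hpq hrm hmn
  have hmr : 0 < m.choose r := Nat.choose_pos hrm
  have hnr : 0 < n.choose r := Nat.choose_pos (hrm.trans hmn)
  have hsub : 0 < (n - r).choose (m - r) := Nat.choose_pos (by omega)
  rw [div_le_div_iff₀ (by exact_mod_cast hmr) (by exact_mod_cast hnr)]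
  have h2 : n.choose r * ((n - r).choose (m - r) * minEdges r m q p)
      ≤ (n - r).choose (m - r) * (minEdges r n q p * m.choose r) := by
    calc n.choose r * ((n - r).choose (m - r) * minEdges r m q p)
        = (n.choose m * m.choose r) * minEdges r m q p := by
          rw [Nat.choose_mul hrm]; ring
      _ = m.choose r * (n.choose m * minEdges r m q p) := by ring
      _ ≤ m.choose r * (minEdges r n q p * (n - r).choose (m - r)) :=
          Nat.mul_le_mul_left _ h
      _ = (n - r).choose (m - r) * (minEdges r n q p * m.choose r) := by ring
  have h3 : minEdges r m q p * n.choose r ≤ minEdges r n q p * m.choose r := by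
    have := Nat.le_of_mul_le_mul_left
      (by linarith [h2] : (n - r).choose (m - r) * (n.choose r * minEdges r m q p)
        ≤ (n - r).choose (m - r) * (minEdges r n q p * m.choose r)) hsub
    linarith
  exact_mod_cast h3

lemma no_k_disjoint_bad {n r q p q' p' k : ℕ} {G : Finset (Finset (Fin n))}
    (hprop : HasLocalProperty G r q' p') {F : Finset (Finset (Fin n))}
    (hFcard : F.card = k) (hFq : ∀ A ∈ F, A.card = q)
    (hFbad : ∀ A ∈ F, ¬ ∃ B ⊆ A, B.card = p ∧ ∀ e ⊆ B, e.card = r → e ∈ G)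
    (hFdisj : ∀ A ∈ F, ∀ A' ∈ F, A ≠ A' → Disjoint A A')
    (hkq : k * q ≤ q') (hq'n : q' ≤ n)
    (harith : k * (p - 1) + q' < p' + k * q) (hp1 : 1 ≤ p) : False := by
  classical
  set W : Finset (Fin n) := F.biUnion (fun A => A) with hW
  have hWcard : W.card = k * q := by
    rw [hW, Finset.card_biUnion hFdisj]
    rw [Finset.sum_congr rfl hFq, Finset.sum_const, smul_eq_mul, hFcard, mul_comm]
  obtain ⟨A', hWA', hA'⟩ := Finset.exists_superset_card_eq (n := q')
    (by rw [hWcard]; exact hkq) (by simpa using hq'n)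
  obtain ⟨B', hB'A', hB'card, hB'comp⟩ := hprop A' hA'
  -- each part meets B' in at most p-1 points
  have hsmall : ∀ A ∈ F, (B' ∩ A).card ≤ p - 1 := by
    intro A hA
    by_contra hcon
    push_neg at hcon
    have hple : p ≤ (B' ∩ A).card := by omega
    obtain ⟨B₀, hB₀, hB₀card⟩ := Finset.exists_subset_card_eq hple
    exact hFbad A hA ⟨B₀, fun x hx => (Finset.mem_inter.1 (hB₀ hx)).2, hB₀card,
      fun e he her => hB'comp e (fun x hx => (Finset.mem_inter.1 (hB₀ (he hx))).1) her⟩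
  have hBW : (W ∩ B').card = ∑ A ∈ F, (A ∩ B').card := by
    rw [hW, Finset.biUnion_inter]
    exact Finset.card_biUnion fun x hx y hy hxy =>
      Finset.disjoint_of_subset_left Finset.inter_subset_left
        (Finset.disjoint_of_subset_right Finset.inter_subset_left (hFdisj x hx y hy hxy))
  have hsum : ∑ A ∈ F, (A ∩ B').card ≤ k * (p - 1) := by
    calc ∑ A ∈ F, (A ∩ B').card ≤ ∑ _A ∈ F, (p - 1) :=
          Finset.sum_le_sum fun A hA => by
            rw [Finset.inter_comm]; exact hsmall A hA
      _ = k * (p - 1) := by rw [Finset.sum_const, smul_eq_mul, hFcard]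
  have hsplit : (B' ∩ W).card + (B' \ W).card = p' := by
    rw [Finset.card_inter_add_card_sdiff, hB'card]
  have hBsdiff : (B' \ W).card ≤ q' - k * q := by
    calc (B' \ W).card ≤ (A' \ W).card :=
          Finset.card_le_card (fun x hx => Finset.mem_sdiff.2
            ⟨hB'A' (Finset.mem_sdiff.1 hx).1, (Finset.mem_sdiff.1 hx).2⟩)
      _ = q' - k * q := by rw [Finset.card_sdiff_of_subset hWA', hA', hWcard]
  rw [Finset.inter_comm] at hBW
  omega

lemma key_step {r q p q' p' k n : ℕ} (hpq : p ≤ q) (hq1 : 1 ≤ q) (hp1 : 1 ≤ p)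
    (hp'q' : p' ≤ q') (hkq : k * q ≤ q') (hq'n : q' ≤ n)
    (harith : k * (p - 1) + q' < p' + k * q) :
    minEdges r (n - (k - 1) * q) q p ≤ minEdges r n q' p' := by
  classical
  obtain ⟨G, hG1, hG2, hG3⟩ := exists_min_graph r n q' p' hp'q'
  -- the family of "bad" q-sets
  set Bad : Finset (Finset (Fin n)) := ((Finset.univ : Finset (Fin n)).powersetCard q).filter
    (fun A => ¬ ∃ B ⊆ A, B.card = p ∧ ∀ e ⊆ B, e.card = r → e ∈ G) with hBad
  -- maximal pairwise disjoint subfamily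
  set ℱ : Finset (Finset (Finset (Fin n))) := Bad.powerset.filter
    (fun F => ∀ A ∈ F, ∀ A' ∈ F, A ≠ A' → Disjoint A A') with hℱ
  have hne : ℱ.Nonempty := ⟨∅, by simp [hℱ]⟩
  obtain ⟨F, hFℱ, hFmax⟩ := Finset.exists_max_image ℱ Finset.card hne
  obtain ⟨hFBad, hFdisj⟩ := Finset.mem_filter.1 hFℱ
  rw [Finset.mem_powerset] at hFBad
  have hFq : ∀ A ∈ F, A.card = q := fun A hA =>
    (Finset.mem_powersetCard.1 (Finset.mem_filter.1 (hFBad hA)).1).2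
  have hFbad : ∀ A ∈ F, ¬ ∃ B ⊆ A, B.card = p ∧ ∀ e ⊆ B, e.card = r → e ∈ G :=
    fun A hA => (Finset.mem_filter.1 (hFBad hA)).2
  -- F has fewer than k members
  have hFcard : F.card ≤ k - 1 := by
    by_contra hcon
    push_neg at hcon
    have hkF : k ≤ F.card := by omega
    obtain ⟨F₀, hF₀F, hF₀card⟩ := Finset.exists_subset_card_eq hkF
    exact no_k_disjoint_bad hG2 hF₀card (fun A hA => hFq A (hF₀F hA))
      (fun A hA => hFbad A (hF₀F hA))
      (fun A hA A' hA' hne' => hFdisj A (hF₀F hA) A' (hF₀F hA') hne')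
      hkq hq'n harith hp1
  set U : Finset (Fin n) := F.biUnion (fun A => A) with hU
  have hUcard : U.card ≤ (k - 1) * q := by
    calc U.card ≤ ∑ A ∈ F, A.card := Finset.card_biUnion_le
      _ = F.card * q := by rw [Finset.sum_congr rfl hFq, Finset.sum_const, smul_eq_mul]
      _ ≤ (k - 1) * q := Nat.mul_le_mul_right q hFcard
  -- every bad set meets U
  have hhit : ∀ A ∈ Bad, (A ∩ U).Nonempty := by
    intro A hA
    by_contra hcon
    rw [Finset.not_nonempty_iff_eq_empty] at hcon
    have hdisjU : ∀ A' ∈ F, Disjoint A A' := by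
      intro A' hA'
      refine Finset.disjoint_left.2 fun x hx hx' => ?_
      have : x ∈ A ∩ U := Finset.mem_inter.2 ⟨hx, Finset.mem_biUnion.2 ⟨A', hA', hx'⟩⟩
      simp [hcon] at this
    have hAnotF : A ∉ F := by
      intro hAF
      have hAq : A.card = q := hFq A hAF
      have hAe : A = ⊥ := disjoint_self.1 (hdisjU A hAF)
      rw [hAe] at hAq
      simp [Finset.bot_eq_empty] at hAq
      omega
    have hmem : insert A F ∈ ℱ := by
      refine Finset.mem_filter.2 ⟨Finset.mem_powerset.2 ?_, ?_⟩
      · intro x hx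
        rcases Finset.mem_insert.1 hx with h | h
        · exact h ▸ hA
        · exact hFBad h
      · intro x hx y hy hxy
        rcases Finset.mem_insert.1 hx with h | h <;> rcases Finset.mem_insert.1 hy with h' | h'
        · exact absurd (h.trans h'.symm) hxy
        · exact h ▸ hdisjU y h'
        · exact (h' ▸ (hdisjU x h)).symm
        · exact hFdisj x h y h' hxy
    have := hFmax _ hmem
    rw [Finset.card_insert_of_notMem hAnotF] at this
    omega
  -- pass to a subset avoiding U
  have hmle : n - (k - 1) * q ≤ (Finset.univ \ U).card := by
    rw [Finset.card_sdiff_of_subset (Finset.subset_univ _), Finset.card_univ, Fintype.card_fin]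
    omega
  obtain ⟨S, hSU, hScard⟩ := Finset.exists_subset_card_eq hmle
  have hgood : ∀ A ⊆ S, A.card = q → ∃ B ⊆ A, B.card = p ∧ ∀ e ⊆ B, e.card = r → e ∈ G := by
    intro A hAS hAq
    by_contra hcon
    have hABad : A ∈ Bad := Finset.mem_filter.2
      ⟨Finset.mem_powersetCard.2 ⟨Finset.subset_univ _, hAq⟩, hcon⟩
    obtain ⟨x, hx⟩ := hhit A hABad
    rw [Finset.mem_inter] at hx
    have := hSU (hAS hx.1)
    rw [Finset.mem_sdiff] at this
    exact this.2 hx.2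
  calc minEdges r (n - (k - 1) * q) q p ≤ (G.filter (· ⊆ S)).card :=
        minEdges_le_filter S hScard hgood
    _ ≤ G.card := Finset.card_le_card (Finset.filter_subset _ _)
    _ = minEdges r n q' p' := hG3

lemma term_nonneg (r q p n : ℕ) : 0 ≤ (minEdges r n q p : ℝ) / (n.choose r) :=
  div_nonneg (Nat.cast_nonneg _) (Nat.cast_nonneg _)

lemma term_le_one (r q p n : ℕ) (hpq : p ≤ q) :
    (minEdges r n q p : ℝ) / (n.choose r) ≤ 1 := by
  rcases Nat.eq_zero_or_pos (n.choose r) with h | h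
  · rw [h]; simp
  · rw [div_le_one (by exact_mod_cast h)]
    exact_mod_cast minEdges_le_choose r n q p hpq

lemma term_bdd (r q p : ℕ) (hpq : p ≤ q) :
    BddAbove (Set.range fun n => (minEdges r n q p : ℝ) / (n.choose r)) :=
  ⟨1, by rintro x ⟨n, rfl⟩; exact term_le_one r q p n hpq⟩

lemma term_monotone (r q p : ℕ) (hpq : p ≤ q) :
    Monotone (fun n => (minEdges r n q p : ℝ) / (n.choose r)) := by
  intro m n hmn
  rcases le_or_gt r m with hrm | hrm
  · exact density_mono r q p hpq hrm hmn
  · simp only [Nat.choose_eq_zero_of_lt hrm, Nat.cast_zero, div_zero]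
    exact term_nonneg r q p n

lemma tendsto_term (r q p : ℕ) (hpq : p ≤ q) :
    Filter.Tendsto (fun n => (minEdges r n q p : ℝ) / (n.choose r)) atTop
      (nhds (tDensity r q p)) :=
  tendsto_atTop_ciSup (term_monotone r q p hpq) (term_bdd r q p hpq)

lemma ratio_single (r : ℕ) :
    Filter.Tendsto (fun m : ℕ => (m.choose r : ℝ) / ((m + 1).choose r)) atTop (nhds 1) := by
  have h1 : Filter.Tendsto (fun m : ℕ => 1 - (r : ℝ) / ((m : ℝ) + 1)) atTop (nhds 1) := by
    have h2 : Filter.Tendsto (fun m : ℕ => (r : ℝ) / ((m : ℝ) + 1)) atTop (nhds 0) :=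
      Filter.Tendsto.div_atTop tendsto_const_nhds
        (tendsto_atTop_add_const_right atTop 1 tendsto_natCast_atTop_atTop)
    simpa using (h2.const_sub 1)
  refine h1.congr' ?_
  filter_upwards [eventually_ge_atTop r] with m hm
  have hpos : (0:ℝ) < ((m + 1).choose r : ℝ) := by
    exact_mod_cast Nat.choose_pos (by omega)
  have hid := Nat.choose_mul_succ_eq m r
  have hidR : (m.choose r : ℝ) * ((m:ℝ) + 1) = ((m + 1).choose r : ℝ) * ((m:ℝ) + 1 - r) := by
    have hc : ((m + 1 - r : ℕ) : ℝ) = (m:ℝ) + 1 - r := by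
      rw [Nat.cast_sub (by omega : r ≤ m + 1)]; push_cast; ring
    have h := congrArg (fun x : ℕ => (x : ℝ)) hid
    push_cast at h
    rw [hc] at h
    linarith [h]
  have hm1 : ((m:ℝ) + 1) ≠ 0 := by positivity
  field_simp
  linear_combination (-1 : ℝ) * hidR

lemma ratio_tendsto (r c : ℕ) :
    Filter.Tendsto (fun m : ℕ => (m.choose r : ℝ) / ((m + c).choose r)) atTop (nhds 1) := by
  induction c with
  | zero =>
    refine Filter.Tendsto.congr' ?_ tendsto_const_nhds
    filter_upwards [eventually_ge_atTop r] with m hm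
    have : (m.choose r : ℝ) ≠ 0 := by exact_mod_cast (Nat.choose_pos hm).ne'
    simp [div_self this]
  | succ c ih =>
    have hstep : Filter.Tendsto (fun m : ℕ => ((m + c).choose r : ℝ) / ((m + c + 1).choose r))
        atTop (nhds 1) := (ratio_single r).comp (Filter.tendsto_add_atTop_nat c)
    have := ih.mul hstep
    rw [mul_one] at this
    refine this.congr' ?_
    filter_upwards [eventually_ge_atTop r] with m hm
    have hne : ((m + c).choose r : ℝ) ≠ 0 := by
      exact_mod_cast (Nat.choose_pos (by omega)).ne'
    have : m + (c + 1) = m + c + 1 := by omega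
    rw [this, div_mul_div_cancel₀]
    exact hne

lemma tDensity_mono_param {r q p q' p' k : ℕ} (hpq : p ≤ q) (hq1 : 1 ≤ q) (hp1 : 1 ≤ p)
    (hp'q' : p' ≤ q') (hkq : k * q ≤ q')
    (harith : k * (p - 1) + q' < p' + k * q) :
    tDensity r q p ≤ tDensity r q' p' := by
  set c := (k - 1) * q with hc
  set g : ℕ → ℝ := fun n => (minEdges r (n - c) q p : ℝ) / (n.choose r) with hg
  have hgle : ∀ᶠ n in atTop, g n ≤ tDensity r q' p' := by
    filter_upwards [eventually_ge_atTop q'] with n hn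
    have hkey : minEdges r (n - c) q p ≤ minEdges r n q' p' :=
      key_step hpq hq1 hp1 hp'q' hkq hn harith
    have h1 : g n ≤ (minEdges r n q' p' : ℝ) / (n.choose r) := by
      show (minEdges r (n - c) q p : ℝ) / (n.choose r) ≤ (minEdges r n q' p' : ℝ) / (n.choose r)
      gcongr
    exact h1.trans (le_ciSup (term_bdd r q' p' hp'q') n)
  have hgtendsto : Filter.Tendsto g atTop (nhds (tDensity r q p)) := by
    have hs : Filter.Tendsto (fun n : ℕ => (minEdges r (n - c) q p : ℝ) / ((n - c).choose r))
        atTop (nhds (tDensity r q p)) :=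
      (tendsto_term r q p hpq).comp (Filter.tendsto_sub_atTop_nat c)
    have hρ : Filter.Tendsto (fun n : ℕ => ((n - c).choose r : ℝ) / (n.choose r))
        atTop (nhds 1) := by
      have := (ratio_tendsto r c).comp (Filter.tendsto_sub_atTop_nat c)
      refine this.congr' ?_
      filter_upwards [eventually_ge_atTop c] with n hn
      simp only [Function.comp]
      rw [Nat.sub_add_cancel hn]
    have := hs.mul hρ
    rw [mul_one] at this
    refine this.congr' ?_
    filter_upwards [eventually_ge_atTop (c + r)] with n hn
    have hne : (((n - c).choose r : ℕ) : ℝ) ≠ 0 := by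
      exact_mod_cast (Nat.choose_pos (by omega : r ≤ n - c)).ne'
    rw [div_mul_div_cancel₀]
    exact hne
  exact le_of_tendsto hgtendsto hgle


/-- For integers q ≥ r ≥ 2 and real γ ≥ 1 with ⌈q/γ⌉ ≥ r,
liminf_{q'→∞} t_r(q',⌈q'/γ⌉) ≥ t_r(q,⌈q/γ⌉). -/
theorem liminf_local_turan_density_ge_fixed (r q : ℕ) (hr : 2 ≤ r) (hq : r ≤ q)
    (γ : ℝ) (hγ : 1 ≤ γ) (hp : r ≤ ⌈(q : ℝ) / γ⌉₊) :
    tDensity r q ⌈(q : ℝ) / γ⌉₊ ≤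
      liminf (fun q' : ℕ => tDensity r q' ⌈(q' : ℝ) / γ⌉₊) atTop := by
  have hγ0 : (0:ℝ) < γ := lt_of_lt_of_le one_pos hγ
  set p := ⌈(q : ℝ) / γ⌉₊ with hpdef
  have hq0 : 0 < q := by omega
  have hp1 : 1 ≤ p := by omega
  have hceil_le : ∀ m : ℕ, ⌈(m:ℝ)/γ⌉₊ ≤ m := fun m =>
    Nat.ceil_le.2 (div_le_self (Nat.cast_nonneg m) hγ)
  have hpq : p ≤ q := hceil_le q
  set δ : ℝ := (q:ℝ)/γ - ((p:ℝ) - 1) with hδdef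
  have hδ : 0 < δ := by
    have h0 : (0:ℝ) ≤ (q:ℝ)/γ := div_nonneg (Nat.cast_nonneg q) hγ0.le
    have := Nat.ceil_lt_add_one h0
    rw [hδdef]
    rw [← hpdef] at this
    linarith
  set k₀ := ⌈(q:ℝ)/δ⌉₊ with hk₀def
  refine Filter.le_liminf_of_le ?_ ?_
  · refine Filter.IsBoundedUnder.isCoboundedUnder_ge (⟨1, ?_⟩ :
      Filter.IsBoundedUnder (· ≤ ·) atTop _)
    refine Filter.eventually_map.2 (Filter.Eventually.of_forall fun q' => ?_)
    exact ciSup_le fun n => term_le_one r q' _ n (hceil_le q')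
  · rw [eventually_atTop]
    refine ⟨q * (k₀ + 1), fun q' hq' => ?_⟩
    set p' := ⌈(q' : ℝ)/γ⌉₊ with hp'def
    set k := q' / q with hkdef
    have hkq : k * q ≤ q' := Nat.div_mul_le_self q' q
    have hdm := Nat.div_add_mod q' q
    have hmod := Nat.mod_lt q' hq0
    have hkk : k₀ + 1 ≤ k := by
      rw [hkdef, Nat.le_div_iff_mul_le hq0]
      calc (k₀ + 1) * q = q * (k₀ + 1) := mul_comm _ _
        _ ≤ q' := hq'
    have hk₀R : (q:ℝ)/δ ≤ (k₀:ℝ) := Nat.le_ceil _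
    have hkR : (k₀:ℝ) + 1 ≤ (k:ℝ) := by exact_mod_cast hkk
    have h2 : (q:ℝ) ≤ (k:ℝ) * δ := by
      have h2a : (q:ℝ)/δ * δ ≤ (k:ℝ) * δ :=
        mul_le_mul_of_nonneg_right (by linarith) hδ.le
      rwa [div_mul_cancel₀ _ hδ.ne'] at h2a
    have heq : (k:ℝ)*((p:ℝ)-1) + (k:ℝ)*δ = ((k:ℝ)*(q:ℝ))/γ := by
      rw [hδdef]; field_simp; ring
    have hdiv : ((k:ℝ)*(q:ℝ))/γ ≤ (q':ℝ)/γ := by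
      gcongr
      exact_mod_cast hkq
    have harithR : (k:ℝ) * ((p:ℝ) - 1) + (q:ℝ) ≤ (p':ℝ) := by
      have ha : (k:ℝ) * ((p:ℝ) - 1) + (q:ℝ) ≤ (k:ℝ) * ((p:ℝ) - 1) + (k:ℝ) * δ :=
        add_le_add_right h2 _
      rw [heq] at ha
      exact le_trans ha (le_trans hdiv (Nat.le_ceil _))
    have hnat : k * (p - 1) + q ≤ p' := by
      have hcast : ((k * (p - 1) + q : ℕ) : ℝ) ≤ (p' : ℝ) := by
        push_cast [Nat.cast_sub hp1]
        linarith
      exact_mod_cast hcast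
    have h5 : q' < k * q + q := by
      calc q' = q * k + q' % q := hdm.symm
        _ < q * k + q := Nat.add_lt_add_left hmod _
        _ = k * q + q := by ring
    have harith : k * (p - 1) + q' < p' + k * q := by
      calc k * (p - 1) + q' < k * (p - 1) + (k * q + q) := Nat.add_lt_add_left h5 _
        _ = (k * (p - 1) + q) + k * q := by ring
        _ ≤ p' + k * q := Nat.add_le_add_right hnat _
    exact tDensity_mono_param hpq hq0 hp1 (hceil_le q') hkq harith
end

section
/- Let r ≥ 2, q ≥ r be integers and α ≥ 1 a real number with ⌈q/α⌉ ≥ r. Suppose that the sequence q' ↦ t_r(q', ⌈q'/α⌉) converges as q' → ∞ to the value t_r(q, ⌈q/α⌉). Then for every real number γ with α ≤ γ < q/(⌈q/α⌉ − 1), the sequence q' ↦ t_r(q', ⌈q'/γ⌉) converges as q' → ∞ to the same value t_r(q, ⌈q/α⌉). -/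
open Filter

namespace LocalTuran

open Finset

variable {r n q p : ℕ}

lemma complete_hasProp (hpq : p ≤ q) :
    HasLocalProperty (univ.powersetCard r : Finset (Finset (Fin n))) r q p := by
  intro A hA
  obtain ⟨B, hBA, hB⟩ := exists_subset_card_eq (s := A) (hA ▸ hpq)
  exact ⟨B, hBA, hB, fun e _ hre => mem_powersetCard_univ.2 hre⟩

lemma nonempty_set (hpq : p ≤ q) :
    {m | ∃ G : Finset (Finset (Fin n)), (∀ e ∈ G, e.card = r) ∧
      HasLocalProperty G r q p ∧ G.card = m}.Nonempty :=
  ⟨_, univ.powersetCard r, fun _ he => mem_powersetCard_univ.1 he, complete_hasProp hpq, rfl⟩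

lemma minEdges_le {G : Finset (Finset (Fin n))} (hu : ∀ e ∈ G, e.card = r)
    (h : HasLocalProperty G r q p) : minEdges r n q p ≤ G.card :=
  Nat.sInf_le ⟨G, hu, h, rfl⟩

lemma minEdges_spec (hpq : p ≤ q) :
    ∃ G : Finset (Finset (Fin n)), (∀ e ∈ G, e.card = r) ∧ HasLocalProperty G r q p ∧
      G.card = minEdges r n q p :=
  Nat.sInf_mem (nonempty_set hpq)

lemma minEdges_le_choose (hpq : p ≤ q) : minEdges r n q p ≤ n.choose r := by
  have h := minEdges_le (n := n) (G := univ.powersetCard r)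
    (fun _ he => mem_powersetCard_univ.1 he) (complete_hasProp hpq)
  simpa [card_powersetCard] using h

lemma prop_anti_q {q' : ℕ} (hq : q ≤ q') {G : Finset (Finset (Fin n))}
    (h : HasLocalProperty G r q p) : HasLocalProperty G r q' p := by
  intro A hA
  obtain ⟨A₀, hA₀, hA₀c⟩ := exists_subset_card_eq (s := A) (hA ▸ hq)
  obtain ⟨B, hBA, hB⟩ := h A₀ hA₀c
  exact ⟨B, hBA.trans hA₀, hB⟩

lemma prop_mono_p {p' : ℕ} (hp : p ≤ p') {G : Finset (Finset (Fin n))}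
    (h : HasLocalProperty G r q p') : HasLocalProperty G r q p := by
  intro A hA
  obtain ⟨B, hBA, hBc, hBcl⟩ := h A hA
  obtain ⟨B', hB'B, hB'c⟩ := exists_subset_card_eq (s := B) (hBc ▸ hp)
  exact ⟨B', hB'B.trans hBA, hB'c, fun e he => hBcl e (he.trans hB'B)⟩

lemma minEdges_anti_q {q' : ℕ} (hq : q ≤ q') (hpq : p ≤ q) :
    minEdges r n q' p ≤ minEdges r n q p := by
  obtain ⟨G, hu, h, hc⟩ := minEdges_spec (n := n) (r := r) hpq
  exact hc ▸ minEdges_le hu (prop_anti_q hq h)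

lemma minEdges_mono_p {p' : ℕ} (hp : p ≤ p') (hpq : p' ≤ q) :
    minEdges r n q p ≤ minEdges r n q p' := by
  obtain ⟨G, hu, h, hc⟩ := minEdges_spec (n := n) (r := r) hpq
  exact hc ▸ minEdges_le hu (prop_mono_p hp h)

/-- Restriction lemma: if `G` has the `(q,p)`-property off a vertex set `U`, then the
minimum number of edges on `m ≤ n - |U|` vertices is at most the number of edges of `G`
avoiding `U`. -/
lemma minEdges_le_filter {m : ℕ} (G : Finset (Finset (Fin n))) (hu : ∀ e ∈ G, e.card = r)
    (U : Finset (Fin n)) (hm : m ≤ (univ \ U).card)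
    (hprop : ∀ A : Finset (Fin n), A.card = q → Disjoint A U →
      ∃ B ⊆ A, B.card = p ∧ ∀ e ⊆ B, e.card = r → e ∈ G) :
    minEdges r m q p ≤ (G.filter (fun e => Disjoint e U)).card := by
  obtain ⟨S, hSsub, hScard⟩ := exists_subset_card_eq (s := univ \ U) hm
  let f : Fin m → Fin n := fun i => (S.equivFin.symm (Fin.cast hScard.symm i) : Fin n)
  have hf : Function.Injective f := by
    intro a b hab
    have h1 := S.equivFin.symm.injective (Subtype.val_injective hab)
    exact Fin.val_injective (by simpa using congrArg Fin.val h1)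
  have hfS : ∀ i, f i ∈ S := fun i => (S.equivFin.symm (Fin.cast hScard.symm i)).2
  have hfU : ∀ i, f i ∉ U := fun i => (mem_sdiff.1 (hSsub (hfS i))).2
  set G' : Finset (Finset (Fin m)) :=
    (univ.powersetCard r).filter (fun e => e.image f ∈ G) with hG'
  have hG'u : ∀ e ∈ G', e.card = r := fun e he =>
    mem_powersetCard_univ.1 (mem_filter.1 he).1
  have hG'prop : HasLocalProperty G' r q p := by
    intro A' hA'
    have hAcard : (A'.image f).card = q := by rw [card_image_of_injective _ hf, hA']
    have hdisj : Disjoint (A'.image f) U := by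
      rw [disjoint_left]
      rintro a ha haU
      obtain ⟨i, _, rfl⟩ := mem_image.1 ha
      exact hfU i haU
    obtain ⟨B, hBA, hBp, hBcl⟩ := hprop (A'.image f) hAcard hdisj
    have himg : (A'.filter (fun x => f x ∈ B)).image f = B := by
      rw [← filter_image (f := f) (p := (· ∈ B)), filter_mem_eq_inter, inter_eq_right.2 hBA]
    refine ⟨A'.filter (fun x => f x ∈ B), filter_subset _ _, ?_, ?_⟩
    · rw [← card_image_of_injective _ hf, himg, hBp]
    · intro e he her
      refine mem_filter.2 ⟨mem_powersetCard_univ.2 her, ?_⟩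
      refine hBcl _ (himg ▸ image_subset_image he) ?_
      rw [card_image_of_injective _ hf, her]
  have hcard : G'.card ≤ (G.filter (fun e => Disjoint e U)).card := by
    apply card_le_card_of_injOn (fun e => e.image f)
    · intro e he
      refine mem_filter.2 ⟨(mem_filter.1 he).2, ?_⟩
      rw [disjoint_left]
      rintro a ha haU
      obtain ⟨i, _, rfl⟩ := mem_image.1 ha
      exact hfU i haU
    · intro e₁ _ e₂ _ h
      exact Finset.image_injective hf h
  exact (minEdges_le hG'u hG'prop).trans hcard

/-- Key combinatorial deletion lemma: if every `(k+1)q`-set disjoint from `W` contains a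
clique of size `(k+1)(p-1)+1`, then there is a set `U` of at most `kq` vertices such that
every `q`-set disjoint from `W ∪ U` contains a `p`-clique. -/
lemma exists_deletion (hp1 : 1 ≤ p) (k : ℕ) (G : Finset (Finset (Fin n))) (W : Finset (Fin n))
    (h : ∀ A : Finset (Fin n), A.card = (k+1)*q → Disjoint A W →
      ∃ B ⊆ A, B.card = (k+1)*(p-1)+1 ∧ ∀ e ⊆ B, e.card = r → e ∈ G) :
    ∃ U : Finset (Fin n), U.card ≤ k*q ∧
      ∀ A : Finset (Fin n), A.card = q → Disjoint A (W ∪ U) →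
        ∃ B ⊆ A, B.card = p ∧ ∀ e ⊆ B, e.card = r → e ∈ G := by
  induction k generalizing W with
  | zero =>
    refine ⟨∅, by simp, fun A hA hd => ?_⟩
    have h1 : 1*(p-1)+1 = p := by omega
    have := h A (by simpa using hA) (by simpa using hd)
    rwa [h1] at this
  | succ k ih =>
    by_cases hbad : ∃ A₀ : Finset (Fin n), A₀.card = q ∧ Disjoint A₀ W ∧
        ¬ ∃ B ⊆ A₀, B.card = p ∧ ∀ e ⊆ B, e.card = r → e ∈ G
    · obtain ⟨A₀, hA₀c, hA₀W, hA₀bad⟩ := hbad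
      have h' : ∀ A : Finset (Fin n), A.card = (k+1)*q → Disjoint A (W ∪ A₀) →
          ∃ B ⊆ A, B.card = (k+1)*(p-1)+1 ∧ ∀ e ⊆ B, e.card = r → e ∈ G := by
        intro A hA hdisj
        rw [disjoint_union_right] at hdisj
        obtain ⟨hAW, hAA₀⟩ := hdisj
        have hAu : (A ∪ A₀).card = (k+1+1)*q := by
          rw [card_union_of_disjoint hAA₀, hA, hA₀c]; ring
        obtain ⟨C, hCsub, hCcard, hCcl⟩ := h (A ∪ A₀) hAu
          (disjoint_union_left.2 ⟨hAW, hA₀W⟩)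
        have hCA₀ : (C ∩ A₀).card ≤ p - 1 := by
          by_contra hle
          push_neg at hle
          obtain ⟨B, hBsub, hBcard⟩ := exists_subset_card_eq (s := C ∩ A₀) (by omega : p ≤ _)
          exact hA₀bad ⟨B, hBsub.trans inter_subset_right, hBcard,
            fun e he her => hCcl e (he.trans (hBsub.trans inter_subset_left)) her⟩
        have hsub : C \ A₀ ⊆ A := by
          intro x hx
          replace hx := Finset.mem_sdiff.1 hx
          rcases mem_union.1 (hCsub hx.1) with h | h
          · exact h
          · exact absurd h hx.2
        have hcard : (k+1)*(p-1)+1 ≤ (C \ A₀).card := by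
          have h1 := card_sdiff_add_card_inter C A₀
          have h2 : (k+1+1)*(p-1) = (k+1)*(p-1) + (p-1) := by ring
          omega
        obtain ⟨B, hB, hBc⟩ := exists_subset_card_eq (s := C \ A₀) hcard
        exact ⟨B, hB.trans hsub, hBc,
          fun e he her => hCcl e (he.trans (hB.trans sdiff_subset)) her⟩
      obtain ⟨U', hU'c, hU'⟩ := ih (W ∪ A₀) h'
      refine ⟨A₀ ∪ U', ?_, ?_⟩
      · have := card_union_le A₀ U'
        have h3 : (k+1)*q = q + k*q := by ring
        omega
      · intro A hA hd
        apply hU' A hA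
        simp only [disjoint_union_right] at hd ⊢
        tauto
    · push_neg at hbad
      refine ⟨∅, by simp, fun A hA hd => ?_⟩
      rw [union_empty] at hd
      exact hbad A hA hd

lemma minEdges_key (hp1 : 1 ≤ p) (hpq : p ≤ q) (k m : ℕ) :
    minEdges r m q p ≤ minEdges r (m + k*q) ((k+1)*q) ((k+1)*(p-1)+1) := by
  have hle : (k+1)*(p-1)+1 ≤ (k+1)*q := by
    have := Nat.mul_le_mul_left (k+1) (show p-1+1 ≤ q by omega)
    calc (k+1)*(p-1)+1 ≤ (k+1)*(p-1)+(k+1) := by omega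
      _ = (k+1)*(p-1+1) := by ring
      _ ≤ (k+1)*q := by omega
  obtain ⟨G, hu, hprop, hcard⟩ := minEdges_spec (n := m + k*q) hle
  obtain ⟨U, hUcard, hU⟩ := exists_deletion hp1 k G ∅ (fun A hA _ => hprop A hA)
  have hm : m ≤ ((univ : Finset (Fin (m + k*q))) \ U).card := by
    rw [card_sdiff_of_subset (subset_univ U), card_univ]
    simp only [Fintype.card_fin]
    omega
  have h2 := minEdges_le_filter G hu U hm (fun A hA hd => hU A hA (by simpa using hd))
  calc minEdges r m q p ≤ _ := h2
    _ ≤ G.card := card_filter_le _ _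
    _ = _ := hcard

/-- Double counting: summing, over all vertices `v`, the number of edges avoiding `v`. -/
lemma sum_filter_disjoint (G : Finset (Finset (Fin (n+1)))) (hu : ∀ e ∈ G, e.card = r) :
    ∑ v : Fin (n+1), (G.filter (fun e => Disjoint e ({v} : Finset (Fin (n+1))))).card
      = (n+1-r) * G.card := by
  simp_rw [card_filter]
  rw [Finset.sum_comm]
  have : ∀ e ∈ G, (∑ v : Fin (n+1), if Disjoint e ({v} : Finset (Fin (n+1))) then 1 else 0)
      = n+1-r := by
    intro e he
    rw [← card_filter]
    have h1 : (univ.filter (fun v => Disjoint e ({v} : Finset (Fin (n+1))))) = eᶜ := by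
      ext v
      simp [disjoint_singleton_right]
    rw [h1, card_compl, Fintype.card_fin, hu e he]
  rw [Finset.sum_congr rfl this, Finset.sum_const, smul_eq_mul, mul_comm]

lemma minEdges_succ (hpq : p ≤ q) :
    (n+1) * minEdges r n q p ≤ (n+1-r) * minEdges r (n+1) q p := by
  obtain ⟨G, hu, hprop, hcard⟩ := minEdges_spec (n := n+1) (r := r) hpq
  have hv : ∀ v : Fin (n+1), minEdges r n q p
      ≤ (G.filter (fun e => Disjoint e ({v} : Finset (Fin (n+1))))).card := by
    intro v
    apply minEdges_le_filter G hu {v}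
    · rw [card_sdiff_of_subset (subset_univ _), card_univ]
      simp
    · exact fun A hA _ => hprop A hA
  calc (n+1) * minEdges r n q p = ∑ _v : Fin (n+1), minEdges r n q p := by
        rw [Finset.sum_const, card_univ, Fintype.card_fin, smul_eq_mul]
    _ ≤ ∑ v : Fin (n+1), (G.filter (fun e => Disjoint e ({v} : Finset (Fin (n+1))))).card :=
        Finset.sum_le_sum (fun v _ => hv v)
    _ = (n+1-r) * G.card := sum_filter_disjoint G hu
    _ = (n+1-r) * minEdges r (n+1) q p := by rw [hcard]

section Real

lemma div_mono_num {a b c : ℝ} (h : a ≤ b) (hb : 0 ≤ a) (hc : 0 ≤ c) : a / c ≤ b / c := by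
  rcases eq_or_lt_of_le hc with h0 | h0
  · simp [← h0]
  · gcongr

lemma ratio_le_one (hpq : p ≤ q) :
    (minEdges r n q p : ℝ) / (n.choose r) ≤ 1 := by
  rcases Nat.eq_zero_or_pos (n.choose r) with h0 | h0
  · simp [h0]
  · rw [div_le_one (by exact_mod_cast h0)]
    exact_mod_cast minEdges_le_choose hpq

lemma ratio_nonneg : (0:ℝ) ≤ (minEdges r n q p : ℝ) / (n.choose r) := by positivity

lemma bddAbove (hpq : p ≤ q) :
    BddAbove (Set.range fun n : ℕ => (minEdges r n q p : ℝ) / (n.choose r)) := by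
  refine ⟨1, ?_⟩
  rintro x ⟨n, rfl⟩
  exact ratio_le_one hpq

lemma ratio_mono (hpq : p ≤ q) :
    Monotone (fun n : ℕ => (minEdges r n q p : ℝ) / (n.choose r)) := by
  apply monotone_nat_of_le_succ
  intro n
  rcases lt_or_ge n r with hn | hn
  · have h0 : n.choose r = 0 := Nat.choose_eq_zero_of_lt hn
    simp only [h0, Nat.cast_zero, div_zero]
    exact ratio_nonneg
  · have hC : 0 < n.choose r := Nat.choose_pos hn
    have hC' : 0 < (n+1).choose r := Nat.choose_pos (by omega)
    rw [div_le_div_iff₀ (by exact_mod_cast hC) (by exact_mod_cast hC')]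
    have key : minEdges r n q p * ((n+1).choose r) ≤ minEdges r (n+1) q p * (n.choose r) := by
      have h1 := minEdges_succ (r := r) (n := n) hpq
      have h2 := Nat.choose_mul_succ_eq n r
      have h3 : 0 < n + 1 - r := by omega
      -- multiply h1 by n.choose r and use the identity
      have h4 : minEdges r n q p * ((n+1).choose r) * (n+1-r)
          = ((n+1) * minEdges r n q p) * (n.choose r) := by
        calc minEdges r n q p * ((n+1).choose r) * (n+1-r)
            = minEdges r n q p * ((n+1).choose r * (n+1-r)) := by ring
          _ = minEdges r n q p * (n.choose r * (n+1)) := by rw [← h2]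
          _ = ((n+1) * minEdges r n q p) * (n.choose r) := by ring
      have h5 : ((n+1) * minEdges r n q p) * (n.choose r)
          ≤ ((n+1-r) * minEdges r (n+1) q p) * (n.choose r) :=
        Nat.mul_le_mul_right _ h1
      have h6 : minEdges r n q p * ((n+1).choose r) * (n+1-r)
          ≤ minEdges r (n+1) q p * (n.choose r) * (n+1-r) := by
        rw [h4]
        calc ((n+1) * minEdges r n q p) * (n.choose r)
            ≤ ((n+1-r) * minEdges r (n+1) q p) * (n.choose r) := h5
          _ = minEdges r (n+1) q p * (n.choose r) * (n+1-r) := by ring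
      exact Nat.le_of_mul_le_mul_right h6 h3
    exact_mod_cast key

lemma ratio_le_tDensity (hpq : p ≤ q) (n : ℕ) :
    (minEdges r n q p : ℝ) / (n.choose r) ≤ tDensity r q p :=
  le_ciSup (bddAbove hpq) n

lemma tDensity_nonneg : 0 ≤ tDensity r q p :=
  Real.iSup_nonneg fun _ => ratio_nonneg

lemma tDensity_anti_q {q' : ℕ} (hq : q ≤ q') (hpq : p ≤ q) :
    tDensity r q' p ≤ tDensity r q p := by
  refine ciSup_le fun n => ?_
  refine le_trans ?_ (ratio_le_tDensity hpq n)
  exact div_mono_num (by exact_mod_cast minEdges_anti_q hq hpq) (by positivity)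
    (by positivity)

lemma tDensity_mono_p {p' : ℕ} (hp : p ≤ p') (hpq : p' ≤ q) :
    tDensity r q p ≤ tDensity r q p' := by
  refine ciSup_le fun n => ?_
  refine le_trans ?_ (ratio_le_tDensity hpq n)
  exact div_mono_num (by exact_mod_cast minEdges_mono_p hp hpq) (by positivity)
    (by positivity)

lemma choose_succ_ratio_tendsto (r : ℕ) :
    Tendsto (fun s : ℕ => ((s+1).choose r : ℝ) / (s.choose r)) atTop (nhds 1) := by
  have hden : Tendsto (fun s : ℕ => (s:ℝ) + 1 - r) atTop atTop := by
    have := tendsto_atTop_add_const_right atTop (1 - (r:ℝ)) tendsto_natCast_atTop_atTop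
    convert this using 2 with s
    ring
  have h0 : Tendsto (fun s : ℕ => (r:ℝ) / ((s:ℝ) + 1 - r)) atTop (nhds 0) :=
    Filter.Tendsto.div_atTop tendsto_const_nhds hden
  have h1 : Tendsto (fun s : ℕ => 1 + (r:ℝ) / ((s:ℝ) + 1 - r)) atTop (nhds 1) := by
    have := tendsto_const_nhds (x := (1:ℝ)) (f := atTop (α := ℕ)) |>.add h0
    simpa using this
  refine h1.congr' ?_
  filter_upwards [eventually_ge_atTop r] with s hs
  have hC : 0 < s.choose r := Nat.choose_pos hs
  have hpos : (0:ℝ) < (s:ℝ) + 1 - r := by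
    have : (r:ℝ) ≤ s := by exact_mod_cast hs
    linarith
  have hid : (s.choose r : ℝ) * ((s:ℝ)+1) = ((s+1).choose r : ℝ) * ((s:ℝ)+1-r) := by
    have h2 := Nat.choose_mul_succ_eq s r
    have h3 : ((s+1:ℕ) - r : ℕ) = ((s:ℝ) + 1 - r : ℝ) := by
      push_cast [Nat.cast_sub (by omega : r ≤ s+1)]
      ring
    calc (s.choose r : ℝ) * ((s:ℝ)+1) = ((s.choose r * (s+1) : ℕ) : ℝ) := by push_cast; ring
      _ = (((s+1).choose r * (s+1-r) : ℕ) : ℝ) := by rw [h2]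
      _ = ((s+1).choose r : ℝ) * ((s:ℝ)+1-r) := by push_cast [Nat.cast_sub (by omega : r ≤ s+1)]; ring
  have hCne : (s.choose r : ℝ) ≠ 0 := by positivity
  field_simp
  nlinarith [hid]

lemma choose_ratio_tendsto (r c : ℕ) :
    Tendsto (fun m : ℕ => (((m + c).choose r : ℝ)) / (m.choose r)) atTop (nhds 1) := by
  induction c with
  | zero =>
    refine Tendsto.congr' ?_ tendsto_const_nhds
    filter_upwards [eventually_ge_atTop r] with m hm
    have : (0:ℝ) < m.choose r := by exact_mod_cast Nat.choose_pos hm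
    rw [add_zero]
    field_simp
  | succ c ih =>
    have hcomp : Tendsto (fun m : ℕ => (((m+c)+1).choose r : ℝ) / ((m+c).choose r))
        atTop (nhds 1) :=
      (choose_succ_ratio_tendsto r).comp (tendsto_add_atTop_nat c)
    have h := ih.mul hcomp
    rw [mul_one] at h
    refine h.congr' ?_
    filter_upwards [eventually_ge_atTop r] with m hm
    have h1 : (0:ℝ) < m.choose r := by exact_mod_cast Nat.choose_pos hm
    have h2 : (0:ℝ) < (m+c).choose r := by exact_mod_cast Nat.choose_pos (by omega)
    have h3 : m + (c+1) = (m+c)+1 := by ring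
    rw [h3]
    field_simp

lemma tDensity_key (hp1 : 1 ≤ p) (hpq : p ≤ q) (k : ℕ) :
    tDensity r q p ≤ tDensity r ((k+1)*q) ((k+1)*(p-1)+1) := by
  set Q := (k+1)*q with hQ
  set P := (k+1)*(p-1)+1 with hP
  have hPQ : P ≤ Q := by
    have := Nat.mul_le_mul_left (k+1) (show p-1+1 ≤ q by omega)
    calc P = (k+1)*(p-1)+1 := hP
      _ ≤ (k+1)*(p-1)+(k+1) := by omega
      _ = (k+1)*(p-1+1) := by ring
      _ ≤ (k+1)*q := by omega
  refine ciSup_le fun n => ?_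
  have key : ∀ m : ℕ, max n r ≤ m →
      (minEdges r n q p : ℝ) / (n.choose r)
        ≤ (tDensity r Q P) * (((m + k*q).choose r : ℝ) / (m.choose r)) := by
    intro m hm
    have hrm : r ≤ m := le_trans (le_max_right _ _) hm
    have hnm : n ≤ m := le_trans (le_max_left _ _) hm
    have hCm : (0:ℝ) < m.choose r := by exact_mod_cast Nat.choose_pos hrm
    have hCm' : (0:ℝ) < (m + k*q).choose r := by
      exact_mod_cast Nat.choose_pos (by omega)
    have h1 : (minEdges r n q p : ℝ) / (n.choose r)
        ≤ (minEdges r m q p : ℝ) / (m.choose r) := ratio_mono hpq hnm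
    have h2 : (minEdges r m q p : ℝ) / (m.choose r)
        ≤ (minEdges r (m + k*q) Q P : ℝ) / (m.choose r) :=
      div_mono_num (by exact_mod_cast minEdges_key hp1 hpq k m) (by positivity) hCm.le
    have h3 : (minEdges r (m + k*q) Q P : ℝ) / (m.choose r)
        = ((minEdges r (m + k*q) Q P : ℝ) / ((m + k*q).choose r))
          * (((m + k*q).choose r : ℝ) / (m.choose r)) := by
      field_simp
    have h4 : ((minEdges r (m + k*q) Q P : ℝ) / ((m + k*q).choose r))
          * (((m + k*q).choose r : ℝ) / (m.choose r))
        ≤ (tDensity r Q P) * (((m + k*q).choose r : ℝ) / (m.choose r)) := by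
      apply mul_le_mul_of_nonneg_right (ratio_le_tDensity hPQ _)
      positivity
    calc (minEdges r n q p : ℝ) / (n.choose r) ≤ _ := h1
      _ ≤ _ := h2
      _ = _ := h3
      _ ≤ _ := h4
  have hf : Tendsto (fun m : ℕ => (tDensity r Q P) * (((m + k*q).choose r : ℝ) / (m.choose r)))
      atTop (nhds (tDensity r Q P)) := by
    have := tendsto_const_nhds (x := tDensity r Q P) (f := atTop (α := ℕ))
      |>.mul (choose_ratio_tendsto r (k*q))
    simpa using this
  exact ge_of_tendsto hf (eventually_atTop.2 ⟨max n r, key⟩)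

end Real

end LocalTuran

/-- If t̃_r(α) exists and equals t_r(q,⌈q/α⌉), then for every γ with
α ≤ γ < q/(⌈q/α⌉−1), t̃_r(γ) exists and takes the same value. -/
theorem tendsto_local_turan_density_of_eq (r q : ℕ) (hr : 2 ≤ r) (hq : r ≤ q)
    (α : ℝ) (hα : 1 ≤ α) (hp : r ≤ ⌈(q : ℝ) / α⌉₊)
    (hconv : Tendsto (fun q' : ℕ => tDensity r q' ⌈(q' : ℝ) / α⌉₊) atTop
      (nhds (tDensity r q ⌈(q : ℝ) / α⌉₊)))
    (γ : ℝ) (hγ1 : α ≤ γ) (hγ2 : γ < (q : ℝ) / ((⌈(q : ℝ) / α⌉₊ : ℝ) - 1)) :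
    Tendsto (fun q' : ℕ => tDensity r q' ⌈(q' : ℝ) / γ⌉₊) atTop
      (nhds (tDensity r q ⌈(q : ℝ) / α⌉₊)) := by
  set p := ⌈(q : ℝ) / α⌉₊ with hpdef
  have hα0 : (0:ℝ) < α := lt_of_lt_of_le one_pos hα
  have hγ0 : (0:ℝ) < γ := lt_of_lt_of_le hα0 hγ1
  have hγone : (1:ℝ) ≤ γ := le_trans hα hγ1
  have hq0 : 0 < q := by omega
  have hqR : (0:ℝ) < q := by exact_mod_cast hq0
  have hp2 : 2 ≤ p := le_trans hr hp
  have hpq : p ≤ q := Nat.ceil_le.2 (div_le_self hqR.le hα)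
  have hpm1 : (0:ℝ) < (p:ℝ) - 1 := by
    have : (2:ℝ) ≤ p := by exact_mod_cast hp2
    linarith
  have hεpos : 0 < 1/γ - ((p:ℝ)-1)/q := by
    have h1 : γ * ((p:ℝ)-1) < q := (lt_div_iff₀ hpm1).1 hγ2
    rw [sub_pos, div_lt_div_iff₀ hqR hγ0]
    nlinarith
  set ε := 1/γ - ((p:ℝ)-1)/q with hε
  obtain ⟨N, hN⟩ := exists_nat_gt (((p:ℝ)-1)/ε)
  apply tendsto_of_tendsto_of_tendsto_of_le_of_le' tendsto_const_nhds hconv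
  · -- lower bound, eventually
    filter_upwards [eventually_ge_atTop (max N 1)] with q' hq'
    have hq'1 : 1 ≤ q' := le_trans (le_max_right _ _) hq'
    have hq'N : (((p:ℝ)-1)/ε) < q' := by
      have : (N:ℝ) ≤ q' := by exact_mod_cast le_trans (le_max_left _ _) hq'
      linarith
    set K := q' / q with hK
    have hq'le : q' ≤ (K+1)*q := by
      have hmod : q' % q < q := Nat.mod_lt q' hq0
      calc q' = q*K + q'%q := (Nat.div_add_mod q' q).symm
        _ ≤ q*K + q := by omega
        _ = (K+1)*q := by ring
    have hp'le : ⌈(q':ℝ)/γ⌉₊ ≤ q' := Nat.ceil_le.2 (div_le_self (by positivity) hγone)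
    have hKcast : ((K:ℝ)) ≤ (q':ℝ)/q := Nat.cast_div_le
    have hkey : (((K+1)*(p-1) : ℕ) : ℝ) < (q':ℝ)/γ := by
      have hc1 : (((K+1)*(p-1) : ℕ) : ℝ) = ((K:ℝ)+1)*((p:ℝ)-1) := by
        push_cast [Nat.cast_sub (by omega : 1 ≤ p)]
        ring
      rw [hc1]
      have h2 : ((K:ℝ)+1)*((p:ℝ)-1) ≤ ((q':ℝ)/q + 1)*((p:ℝ)-1) := by
        apply mul_le_mul_of_nonneg_right _ hpm1.le
        linarith
      have h5 : ((p:ℝ)-1) < (q':ℝ) * ε := (div_lt_iff₀ hεpos).1 hq'N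
      have h6 : (q':ℝ)*(1/γ) - (q':ℝ)*(((p:ℝ)-1)/q) = (q':ℝ)*ε := by rw [hε]; ring
      have h7 : ((q':ℝ)/q + 1)*((p:ℝ)-1) = (q':ℝ)*(((p:ℝ)-1)/q) + ((p:ℝ)-1) := by ring
      have h3 : (q':ℝ)/γ = (q':ℝ)*(1/γ) := by ring
      calc ((K:ℝ)+1)*((p:ℝ)-1) ≤ ((q':ℝ)/q + 1)*((p:ℝ)-1) := h2
        _ = (q':ℝ)*(((p:ℝ)-1)/q) + ((p:ℝ)-1) := h7
        _ < (q':ℝ)*(((p:ℝ)-1)/q) + (q':ℝ)*ε := add_lt_add_right h5 _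
        _ = (q':ℝ)*(1/γ) := by rw [hε]; ring
        _ = (q':ℝ)/γ := h3.symm
    have hcl : (K+1)*(p-1)+1 ≤ ⌈(q':ℝ)/γ⌉₊ := Nat.lt_ceil.2 hkey
    calc tDensity r q p ≤ tDensity r ((K+1)*q) ((K+1)*(p-1)+1) :=
          LocalTuran.tDensity_key (by omega) hpq K
      _ ≤ tDensity r ((K+1)*q) ⌈(q':ℝ)/γ⌉₊ :=
          LocalTuran.tDensity_mono_p hcl (le_trans hp'le hq'le)
      _ ≤ tDensity r q' ⌈(q':ℝ)/γ⌉₊ := LocalTuran.tDensity_anti_q hq'le hp'le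
  · -- upper bound
    refine Eventually.of_forall fun q' => ?_
    have h1 : ⌈(q':ℝ)/γ⌉₊ ≤ ⌈(q':ℝ)/α⌉₊ :=
      Nat.ceil_le_ceil (div_le_div_of_nonneg_left (by positivity) hα0 hγ1)
    have h2 : ⌈(q':ℝ)/α⌉₊ ≤ q' := Nat.ceil_le.2 (div_le_self (by positivity) hα)
    exact LocalTuran.tDensity_mono_p h1 h2
end

section
/- Assume that t_3(7,4) = 1/4 and that the sequence q ↦ t_3(q, ⌈q/2⌉) converges to 1/4 as q → ∞ (both proved by Frankl, Huang and Rödl). Then for every real number γ with 2 ≤ γ < 7/3, the sequence q ↦ t_3(q, ⌈q/γ⌉) converges to 1/4 as q → ∞. -/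
open Filter

open scoped Classical

namespace LocalTuranAux

lemma minEdges_le_card {n q p : ℕ} (G : Finset (Finset (Fin n)))
    (h3 : ∀ e ∈ G, e.card = 3) (hp : HasLocalProperty G 3 q p) :
    minEdges 3 n q p ≤ G.card :=
  Nat.sInf_le ⟨G, h3, hp, rfl⟩

lemma setNonempty (n : ℕ) {q p : ℕ} (hpq : p ≤ q) :
    {m | ∃ G : Finset (Finset (Fin n)), (∀ e ∈ G, e.card = 3) ∧
      HasLocalProperty G 3 q p ∧ G.card = m}.Nonempty := by
  refine ⟨(Finset.univ.powersetCard 3).card, Finset.univ.powersetCard 3, ?_, ?_, rfl⟩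
  · intro e he; exact Finset.mem_powersetCard_univ.mp he
  · intro A hA
    obtain ⟨B, hBA, hB⟩ := Finset.exists_subset_card_eq (s := A) (n := p) (by omega)
    exact ⟨B, hBA, hB, fun e _ he3 => Finset.mem_powersetCard_univ.mpr he3⟩

lemma minEdges_le_choose (n : ℕ) {q p : ℕ} (hpq : p ≤ q) :
    minEdges 3 n q p ≤ n.choose 3 := by
  obtain ⟨m, G, h3, hp, hcard⟩ := setNonempty n hpq
  have := minEdges_le_card G h3 hp
  simpa [Finset.card_powersetCard] using
    minEdges_le_card (Finset.univ.powersetCard 3 : Finset (Finset (Fin n)))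
      (fun e he => Finset.mem_powersetCard_univ.mp he)
      (fun A hA => by
        obtain ⟨B, hBA, hB⟩ := Finset.exists_subset_card_eq (s := A) (n := p) (by omega)
        exact ⟨B, hBA, hB, fun e _ he3 => Finset.mem_powersetCard_univ.mpr he3⟩)

lemma minEdges_eq_zero_of_lt {n q : ℕ} (p : ℕ) (hn : n < q) : minEdges 3 n q p = 0 := by
  have : minEdges 3 n q p ≤ (∅ : Finset (Finset (Fin n))).card := by
    apply minEdges_le_card
    · intro e he; simp at he
    · intro A hA
      have := Finset.card_le_univ A
      simp only [Finset.card_univ, Fintype.card_fin] at this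
      omega
  simpa using this

lemma bddA (q p : ℕ) (hpq : p ≤ q) :
    BddAbove (Set.range (fun n : ℕ => (minEdges 3 n q p : ℝ) / (n.choose 3))) := by
  refine ⟨1, ?_⟩
  rintro x ⟨n, rfl⟩
  rcases eq_or_ne (n.choose 3) 0 with h | h
  · have h0 : minEdges 3 n q p = 0 := by
      have := minEdges_le_choose n hpq; omega
    simp [h0]
  · have hpos : (0:ℝ) < (n.choose 3 : ℝ) := by
      exact_mod_cast Nat.pos_of_ne_zero h
    rw [div_le_one hpos]
    exact_mod_cast minEdges_le_choose n hpq

lemma emb_exists {n m : ℕ} (U : Finset (Fin n)) (h : U.card = m) :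
    ∃ ι : Fin m ↪ Fin n, ∀ x, x ∈ Set.range ι ↔ x ∈ U := by
  refine ⟨⟨fun i => ((Finset.equivFinOfCardEq h).symm i : Fin n), fun a b hab => ?_⟩, fun x => ?_⟩
  · exact (Finset.equivFinOfCardEq h).symm.injective (Subtype.coe_injective hab)
  · constructor
    · rintro ⟨i, rfl⟩; exact ((Finset.equivFinOfCardEq h).symm i).2
    · intro hx; exact ⟨Finset.equivFinOfCardEq h ⟨x, hx⟩, by
        show ((Finset.equivFinOfCardEq h).symm (Finset.equivFinOfCardEq h ⟨x, hx⟩) : Fin n) = x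
        rw [Equiv.symm_apply_apply]⟩

lemma minEdges_restrict {m n q p : ℕ} (ι : Fin m ↪ Fin n)
    (G : Finset (Finset (Fin n))) (h3 : ∀ e ∈ G, e.card = 3)
    (hprop : ∀ A : Finset (Fin n), (∀ x ∈ A, x ∈ Set.range ι) → A.card = q →
      ∃ B ⊆ A, B.card = p ∧ ∀ e ⊆ B, e.card = 3 → e ∈ G) :
    minEdges 3 m q p ≤ (G.filter (fun e => ∀ x ∈ e, x ∈ Set.range ι)).card := by
  set G' : Finset (Finset (Fin m)) := Finset.univ.filter (fun e => e.map ι ∈ G) with hG'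
  have hmem : ∀ e : Finset (Fin m), e ∈ G' ↔ e.map ι ∈ G := by
    intro e; simp [hG']
  have hcards : ∀ e ∈ G', e.card = 3 := by
    intro e he
    have := h3 _ ((hmem e).mp he)
    simpa [Finset.card_map] using this
  have hpropG' : HasLocalProperty G' 3 q p := by
    intro A hA
    obtain ⟨B, hBA, hBcard, hBcl⟩ := hprop (A.map ι)
      (by intro x hx
          rcases Finset.mem_map.mp hx with ⟨y, _, rfl⟩
          exact ⟨y, rfl⟩)
      (by rw [Finset.card_map]; exact hA)
    obtain ⟨B₀, hB₀A, rfl⟩ := Finset.subset_map_iff.mp hBA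
    refine ⟨B₀, hB₀A, by simpa [Finset.card_map] using hBcard, ?_⟩
    intro e he he3
    rw [hmem]
    exact hBcl (e.map ι) (Finset.map_subset_map.mpr he) (by simpa [Finset.card_map] using he3)
  refine le_trans (minEdges_le_card G' hcards hpropG') ?_
  apply Finset.card_le_card_of_injOn (fun e => e.map ι)
  · intro e he
    show e.map ι ∈ G.filter (fun e => ∀ x ∈ e, x ∈ Set.range ι)
    simp only [Finset.mem_filter]
    refine ⟨(hmem e).mp he, ?_⟩
    intro x hx
    rcases Finset.mem_map.mp hx with ⟨y, _, rfl⟩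
    exact ⟨y, rfl⟩
  · intro a _ b _ hab
    exact Finset.map_injective ι hab

lemma avg (n : ℕ) :
    (n + 1) * minEdges 3 n 7 4 ≤ (n - 2) * minEdges 3 (n + 1) 7 4 := by
  obtain ⟨G, h3, hp, hcard⟩ := Nat.sInf_mem (setNonempty (n+1) (by norm_num : 4 ≤ 7))
  have key : ∀ v : Fin (n+1), minEdges 3 n 7 4 ≤ (G.filter (fun e => v ∉ e)).card := by
    intro v
    have hUcard : (Finset.univ.erase v).card = n := by
      rw [Finset.card_erase_of_mem (Finset.mem_univ v)]
      simp
    obtain ⟨ι, hι⟩ := emb_exists (Finset.univ.erase v) hUcard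
    have hres := minEdges_restrict ι G h3 (fun A _ hA => hp A hA)
    refine le_trans hres (le_of_eq ?_)
    congr 1
    apply Finset.filter_congr
    intro e _
    constructor
    · intro hall hv
      have := (hι v).mp (hall v hv)
      simp [Finset.mem_erase] at this
    · intro hv x hx
      refine (hι x).mpr ?_
      rw [Finset.mem_erase]
      exact ⟨by rintro rfl; exact hv hx, Finset.mem_univ x⟩
  have hsum : ∑ v : Fin (n+1), (G.filter (fun e => v ∉ e)).card = (n - 2) * G.card := by
    have step1 : ∀ v : Fin (n+1),
        (G.filter (fun e => v ∉ e)).card = ∑ e ∈ G, if v ∉ e then 1 else 0 :=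
      fun v => Finset.card_filter _ _
    calc ∑ v : Fin (n+1), (G.filter (fun e => v ∉ e)).card
        = ∑ v : Fin (n+1), ∑ e ∈ G, if v ∉ e then 1 else 0 := by
          exact Finset.sum_congr rfl (fun v _ => step1 v)
      _ = ∑ e ∈ G, ∑ v : Fin (n+1), if v ∉ e then 1 else 0 := Finset.sum_comm
      _ = ∑ e ∈ G, (n - 2) := by
          apply Finset.sum_congr rfl
          intro e he
          have h1 : (∑ v : Fin (n+1), if v ∉ e then 1 else 0)
              = (Finset.univ.filter (fun v : Fin (n+1) => v ∉ e)).card :=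
            (Finset.card_filter _ _).symm
          have h2 : Finset.univ.filter (fun v : Fin (n+1) => v ∉ e) = Finset.univ \ e :=
            (Finset.sdiff_eq_filter _ _).symm
          rw [h1, h2, Finset.card_sdiff_of_subset (Finset.subset_univ e), Finset.card_univ,
            Fintype.card_fin, h3 e he]
          omega
      _ = (n - 2) * G.card := by
          rw [Finset.sum_const, smul_eq_mul, mul_comm]
  calc (n + 1) * minEdges 3 n 7 4
      = ∑ _v : Fin (n+1), minEdges 3 n 7 4 := by
        rw [Finset.sum_const, Finset.card_univ, Fintype.card_fin, smul_eq_mul]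
    _ ≤ ∑ v : Fin (n+1), (G.filter (fun e => v ∉ e)).card :=
        Finset.sum_le_sum (fun v _ => key v)
    _ = (n - 2) * G.card := hsum
    _ = (n - 2) * minEdges 3 (n+1) 7 4 := by rw [hcard]; rfl

lemma choose_id (n : ℕ) : (n + 1) * n.choose 3 = (n - 2) * (n + 1).choose 3 := by
  rcases Nat.lt_or_ge n 2 with h | h
  · interval_cases n <;> decide
  · have h1 : n.choose 3 * 3 = n.choose 2 * (n - 2) := Nat.choose_succ_right_eq n 2
    have h2 : (n + 1).choose 3 = n.choose 2 + n.choose 3 := Nat.choose_succ_succ n 2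
    have h3 : n + 1 = 3 + (n - 2) := by omega
    rw [h2, Nat.mul_add]
    calc (n + 1) * n.choose 3 = 3 * n.choose 3 + (n - 2) * n.choose 3 := by
          rw [h3, Nat.add_mul]
      _ = (n - 2) * n.choose 2 + (n - 2) * n.choose 3 := by
          rw [show 3 * n.choose 3 = n.choose 3 * 3 by ring, h1]; ring_nf

lemma gmono : Monotone (fun m : ℕ => (minEdges 3 m 7 4 : ℝ) / (m.choose 3 : ℝ)) := by
  apply monotone_nat_of_le_succ
  intro n
  rcases Nat.lt_or_ge n 3 with h | h
  · have h0 : minEdges 3 n 7 4 = 0 := minEdges_eq_zero_of_lt 4 (by omega)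
    simp only [h0, Nat.cast_zero, zero_div]
    positivity
  · have hC : (0:ℝ) < (n.choose 3 : ℝ) := by
      exact_mod_cast Nat.choose_pos h
    have hC' : (0:ℝ) < ((n+1).choose 3 : ℝ) := by
      exact_mod_cast Nat.choose_pos (by omega : 3 ≤ n + 1)
    rw [div_le_div_iff₀ hC hC']
    have hN : minEdges 3 n 7 4 * (n+1).choose 3 ≤ minEdges 3 (n+1) 7 4 * n.choose 3 := by
      have h1 := avg n
      have h2 := choose_id n
      have hkey : (n - 2) * (minEdges 3 n 7 4 * (n+1).choose 3)
          ≤ (n - 2) * (minEdges 3 (n+1) 7 4 * n.choose 3) := by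
        calc (n - 2) * (minEdges 3 n 7 4 * (n+1).choose 3)
            = minEdges 3 n 7 4 * ((n - 2) * (n+1).choose 3) := by ring
          _ = minEdges 3 n 7 4 * ((n + 1) * n.choose 3) := by rw [← h2]
          _ = ((n + 1) * minEdges 3 n 7 4) * n.choose 3 := by ring
          _ ≤ ((n - 2) * minEdges 3 (n+1) 7 4) * n.choose 3 :=
              Nat.mul_le_mul_right _ h1
          _ = (n - 2) * (minEdges 3 (n+1) 7 4 * n.choose 3) := by ring
      exact Nat.le_of_mul_le_mul_left hkey (by omega)
    exact_mod_cast hN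

lemma covering (k n : ℕ) (hk : 1 ≤ k) :
    minEdges 3 (n - 7 * (k - 1)) 7 4 ≤ minEdges 3 n (7 * k) (3 * k + 1) := by
  obtain ⟨G, h3, hp, hcard⟩ := Nat.sInf_mem (setNonempty n (by omega : 3 * k + 1 ≤ 7 * k))
  set good : Finset (Fin n) → Prop :=
    fun A => ∃ B ⊆ A, B.card = 4 ∧ ∀ e ⊆ B, e.card = 3 → e ∈ G with hgood
  set P : Finset (Finset (Fin n)) → Prop := fun C =>
    (∀ A ∈ C, A.card = 7 ∧ ¬ good A) ∧ ∀ A ∈ C, ∀ B ∈ C, A ≠ B → Disjoint A B with hP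
  obtain ⟨C₀, hC₀mem, hmax⟩ :=
    Finset.exists_max_image (Finset.univ.filter P) Finset.card ⟨∅, by simp [hP]⟩
  have hC₀P : P C₀ := (Finset.mem_filter.mp hC₀mem).2
  have hsize : C₀.card ≤ k - 1 := by
    by_contra hlt
    push_neg at hlt
    obtain ⟨C', hC'sub, hC'card⟩ := Finset.exists_subset_card_eq (s := C₀) (n := k) (by omega)
    have hA7 : ∀ A ∈ C', A.card = 7 := fun A hA => (hC₀P.1 A (hC'sub hA)).1
    have hdisj : ∀ A ∈ C', ∀ B ∈ C', A ≠ B → Disjoint (id A) (id B) :=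
      fun A hA B hB hAB => hC₀P.2 A (hC'sub hA) B (hC'sub hB) hAB
    have hAcard : (C'.biUnion id).card = 7 * k := by
      rw [Finset.card_biUnion hdisj]
      calc ∑ a ∈ C', (id a).card = ∑ a ∈ C', 7 :=
            Finset.sum_congr rfl (fun a ha => hA7 a ha)
        _ = 7 * k := by rw [Finset.sum_const, smul_eq_mul, hC'card]; ring
    obtain ⟨B, hBA, hBcard, hBcl⟩ := hp (C'.biUnion id) hAcard
    have hBsub : B ⊆ C'.biUnion (fun a => B ∩ a) := by
      intro x hx
      rcases Finset.mem_biUnion.mp (hBA hx) with ⟨a, ha, hxa⟩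
      exact Finset.mem_biUnion.mpr ⟨a, ha, Finset.mem_inter.mpr ⟨hx, hxa⟩⟩
    have hcard_le : B.card ≤ ∑ a ∈ C', (B ∩ a).card :=
      le_trans (Finset.card_le_card hBsub) Finset.card_biUnion_le
    have hex : ∃ a ∈ C', 4 ≤ (B ∩ a).card := by
      by_contra hno
      push_neg at hno
      have hle : ∑ a ∈ C', (B ∩ a).card ≤ ∑ _a ∈ C', 3 :=
        Finset.sum_le_sum (fun a ha => by have := hno a ha; omega)
      rw [Finset.sum_const, smul_eq_mul, hC'card] at hle
      omega
    obtain ⟨a, haC', ha4⟩ := hex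
    obtain ⟨B', hB'sub, hB'card⟩ := Finset.exists_subset_card_eq (s := _) (n := 4) ha4
    have hgooda : good a := by
      refine ⟨B', fun x hx => (Finset.mem_inter.mp (hB'sub hx)).2, hB'card, ?_⟩
      intro e he he3
      exact hBcl e (fun x hx => (Finset.mem_inter.mp (hB'sub (he hx))).1) he3
    exact (hC₀P.1 a (hC'sub haC')).2 hgooda
  set W := C₀.biUnion id with hW
  have hWcard : W.card ≤ 7 * (k - 1) := by
    refine le_trans Finset.card_biUnion_le ?_
    calc ∑ a ∈ C₀, (id a).card = ∑ a ∈ C₀, 7 :=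
          Finset.sum_congr rfl (fun a ha => (hC₀P.1 a ha).1)
      _ = C₀.card * 7 := by rw [Finset.sum_const, smul_eq_mul]
      _ ≤ (k - 1) * 7 := Nat.mul_le_mul_right _ hsize
      _ = 7 * (k - 1) := by ring
  have hgoodAll : ∀ A : Finset (Fin n), A.card = 7 → Disjoint A W → good A := by
    intro A hA7 hAW
    by_contra hbad
    have hAnot : A ∉ C₀ := by
      intro hmem
      have hsub : A ⊆ W := Finset.subset_biUnion_of_mem id hmem
      have : A = ∅ := Finset.eq_empty_of_forall_notMem
        (fun x hx => (Finset.disjoint_left.mp hAW) hx (hsub hx))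
      rw [this] at hA7
      simp at hA7
    have hins : insert A C₀ ∈ Finset.univ.filter P := by
      rw [Finset.mem_filter]
      refine ⟨Finset.mem_univ _, ?_, ?_⟩
      · intro X hX
        rcases Finset.mem_insert.mp hX with rfl | hX
        · exact ⟨hA7, hbad⟩
        · exact hC₀P.1 X hX
      · have hdisjW : ∀ X ∈ C₀, Disjoint A X := by
          intro X hX
          have hXW : X ⊆ W := Finset.subset_biUnion_of_mem id hX
          exact Finset.disjoint_of_subset_right hXW hAW
        intro X hX Y hY hXY
        rcases Finset.mem_insert.mp hX with rfl | hX'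
        · rcases Finset.mem_insert.mp hY with rfl | hY'
          · exact absurd rfl hXY
          · exact hdisjW Y hY'
        · rcases Finset.mem_insert.mp hY with rfl | hY'
          · exact (hdisjW X hX').symm
          · exact hC₀P.2 X hX' Y hY' hXY
    have := hmax _ hins
    rw [Finset.card_insert_of_notMem hAnot] at this
    omega
  set m := n - 7 * (k - 1) with hm
  have hUle : m ≤ (Finset.univ \ W).card := by
    rw [Finset.card_sdiff_of_subset (Finset.subset_univ W), Finset.card_univ, Fintype.card_fin]
    omega
  obtain ⟨U, hUsub, hUm⟩ := Finset.exists_subset_card_eq (s := _) (n := m) hUle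
  obtain ⟨ι, hι⟩ := emb_exists U hUm
  have hside : ∀ A : Finset (Fin n), (∀ x ∈ A, x ∈ Set.range ι) → A.card = 7 →
      ∃ B ⊆ A, B.card = 4 ∧ ∀ e ⊆ B, e.card = 3 → e ∈ G := by
    intro A hAr hA7
    apply hgoodAll A hA7
    rw [Finset.disjoint_left]
    intro x hxA hxW
    have hxU : x ∈ U := (hι x).mp (hAr x hxA)
    have := hUsub hxU
    rw [Finset.mem_sdiff] at this
    exact this.2 hxW
  have hres := minEdges_restrict ι G h3 hside
  calc minEdges 3 m 7 4 ≤ (G.filter (fun e => ∀ x ∈ e, x ∈ Set.range ι)).card := hres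
    _ ≤ G.card := Finset.card_filter_le _ _
    _ = minEdges 3 n (7 * k) (3 * k + 1) := hcard

lemma tendsto_ratio_one :
    Tendsto (fun j : ℕ => ((j.choose 3 : ℝ) / ((j + 1).choose 3 : ℝ))) atTop (nhds 1) := by
  have hzero : Tendsto (fun j : ℕ => 3 / ((j : ℝ) + 1)) atTop (nhds 0) := by
    have h1 := (tendsto_const_div_atTop_nhds_zero_nat (3:ℝ)).comp (tendsto_add_atTop_nat 1)
    refine h1.congr fun j => ?_
    simp only [Function.comp_apply]
    push_cast
    ring
  have h0 : Tendsto (fun j : ℕ => 1 - 3 / ((j : ℝ) + 1)) atTop (nhds 1) := by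
    have := (tendsto_const_nhds : Tendsto (fun _ : ℕ => (1:ℝ)) atTop (nhds 1)).sub hzero
    simpa using this
  apply h0.congr'
  filter_upwards [eventually_ge_atTop 3] with j hj
  have hC' : (0:ℝ) < ((j + 1).choose 3 : ℝ) := by
    exact_mod_cast Nat.choose_pos (by omega : 3 ≤ j + 1)
  have hj1 : ((j : ℝ) + 1) ≠ 0 := by positivity
  have hid : ((j : ℝ) + 1) * (j.choose 3 : ℝ) = ((j : ℝ) - 2) * ((j + 1).choose 3 : ℝ) := by
    have h2 : (2 : ℕ) ≤ j := by omega
    have hcast : (((j + 1) : ℕ) : ℝ) * ((j.choose 3 : ℕ) : ℝ)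
        = (((j - 2) : ℕ) : ℝ) * (((j + 1).choose 3 : ℕ) : ℝ) := by
      exact_mod_cast choose_id j
    rw [Nat.cast_sub h2] at hcast
    push_cast at hcast
    linarith [hcast]
  rw [eq_div_iff hC'.ne']
  field_simp
  linarith [hid]

lemma tendsto_ratio_c (c : ℕ) :
    Tendsto (fun m : ℕ => ((m.choose 3 : ℝ) / ((m + c).choose 3 : ℝ))) atTop (nhds 1) := by
  induction c with
  | zero =>
    refine Tendsto.congr' ?_ tendsto_const_nhds
    filter_upwards [eventually_ge_atTop 3] with m hm
    have : (0:ℝ) < (m.choose 3 : ℝ) := by exact_mod_cast Nat.choose_pos hm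
    rw [Nat.add_zero, div_self this.ne']
  | succ c ih =>
    have h2 := tendsto_ratio_one.comp (tendsto_add_atTop_nat c)
    have hmul := ih.mul h2
    rw [mul_one] at hmul
    apply hmul.congr'
    filter_upwards [eventually_ge_atTop 3] with m hm
    have hne : ((m + c).choose 3 : ℝ) ≠ 0 := by
      have : (0:ℝ) < ((m + c).choose 3 : ℝ) := by
        exact_mod_cast Nat.choose_pos (by omega : 3 ≤ m + c)
      exact this.ne'
    show (m.choose 3 : ℝ) / ((m + c).choose 3 : ℝ) *
        (((m + c).choose 3 : ℝ) / ((m + c + 1).choose 3 : ℝ))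
        = (m.choose 3 : ℝ) / ((m + (c + 1)).choose 3 : ℝ)
    rw [div_mul_div_cancel₀ hne, show m + c + 1 = m + (c + 1) by ring]

lemma core (h74 : tDensity 3 7 4 = 1/4) (k : ℕ) (hk : 1 ≤ k) :
    (1/4 : ℝ) ≤ tDensity 3 (7 * k) (3 * k + 1) := by
  set c := 7 * (k - 1) with hc
  have hbddh : BddAbove (Set.range
      (fun n : ℕ => (minEdges 3 n (7 * k) (3 * k + 1) : ℝ) / (n.choose 3))) :=
    bddA (7 * k) (3 * k + 1) (by omega)
  have hg : Tendsto (fun m : ℕ => (minEdges 3 m 7 4 : ℝ) / (m.choose 3)) atTop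
      (nhds (1/4)) := by
    have h := tendsto_atTop_ciSup gmono (bddA 7 4 (by norm_num))
    have hsup : (⨆ m : ℕ, (minEdges 3 m 7 4 : ℝ) / (m.choose 3)) = tDensity 3 7 4 := rfl
    rw [hsup, h74] at h
    exact h
  have hu : Tendsto (fun m : ℕ =>
      ((minEdges 3 m 7 4 : ℝ) / (m.choose 3)) * ((m.choose 3 : ℝ) / ((m + c).choose 3)))
      atTop (nhds (1/4)) := by
    have := hg.mul (tendsto_ratio_c c)
    simpa using this
  refine le_of_tendsto hu ?_
  filter_upwards [eventually_ge_atTop 3] with m hm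
  have hCm : (0:ℝ) < (m.choose 3 : ℝ) := by exact_mod_cast Nat.choose_pos hm
  have hCmc : (0:ℝ) < ((m + c).choose 3 : ℝ) := by
    exact_mod_cast Nat.choose_pos (by omega : 3 ≤ m + c)
  have h1 : ((minEdges 3 m 7 4 : ℝ) / (m.choose 3)) * ((m.choose 3 : ℝ) / ((m + c).choose 3))
      = (minEdges 3 m 7 4 : ℝ) / ((m + c).choose 3) :=
    div_mul_div_cancel₀ hCm.ne'
  rw [h1]
  have h2 : (minEdges 3 m 7 4 : ℝ) ≤ (minEdges 3 (m + c) (7 * k) (3 * k + 1) : ℝ) := by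
    have := covering k (m + c) hk
    rw [← hc, Nat.add_sub_cancel] at this
    exact_mod_cast this
  have h3 : (minEdges 3 m 7 4 : ℝ) / ((m + c).choose 3)
      ≤ (minEdges 3 (m + c) (7 * k) (3 * k + 1) : ℝ) / ((m + c).choose 3) := by
    gcongr
  exact le_trans h3 (le_ciSup hbddh (m + c))

lemma minEdges_mono_p {n q p p' : ℕ} (h1 : p' ≤ p) (h2 : p ≤ q) :
    minEdges 3 n q p' ≤ minEdges 3 n q p := by
  obtain ⟨G, h3, hp, hcard⟩ := Nat.sInf_mem (setNonempty n h2)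
  have hp' : HasLocalProperty G 3 q p' := by
    intro A hA
    obtain ⟨B, hBA, hBcard, hBcl⟩ := hp A hA
    obtain ⟨B', hB'B, hB'⟩ := Finset.exists_subset_card_eq (s := B) (n := p') (by omega)
    exact ⟨B', hB'B.trans hBA, hB', fun e he he3 => hBcl e (he.trans hB'B) he3⟩
  calc minEdges 3 n q p' ≤ G.card := minEdges_le_card G h3 hp'
    _ = minEdges 3 n q p := hcard

lemma minEdges_mono_q {n q q' p : ℕ} (h1 : q ≤ q') (h2 : p ≤ q) :
    minEdges 3 n q' p ≤ minEdges 3 n q p := by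
  obtain ⟨G, h3, hp, hcard⟩ := Nat.sInf_mem (setNonempty n h2)
  have hp' : HasLocalProperty G 3 q' p := by
    intro A hA
    obtain ⟨A₀, hA₀A, hA₀⟩ := Finset.exists_subset_card_eq (s := A) (n := q) (by omega)
    obtain ⟨B, hBA, hBcard, hBcl⟩ := hp A₀ hA₀
    exact ⟨B, hBA.trans hA₀A, hBcard, hBcl⟩
  calc minEdges 3 n q' p ≤ G.card := minEdges_le_card G h3 hp'
    _ = minEdges 3 n q p := hcard

lemma div_card_mono {a b : ℕ} (n : ℕ) (h : a ≤ b) :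
    (a : ℝ) / (n.choose 3) ≤ (b : ℝ) / (n.choose 3) := by
  rcases eq_or_ne ((n.choose 3 : ℝ)) 0 with h0 | h0
  · rw [h0]; simp
  · have hpos : (0:ℝ) < (n.choose 3 : ℝ) := lt_of_le_of_ne (by positivity) (Ne.symm h0)
    have hab : (a:ℝ) ≤ (b:ℝ) := by exact_mod_cast h
    gcongr

lemma tDensity_mono_p {q p p' : ℕ} (h1 : p' ≤ p) (h2 : p ≤ q) :
    tDensity 3 q p' ≤ tDensity 3 q p := by
  show (⨆ n : ℕ, (minEdges 3 n q p' : ℝ) / (n.choose 3))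
      ≤ ⨆ n : ℕ, (minEdges 3 n q p : ℝ) / (n.choose 3)
  exact ciSup_mono (bddA q p h2) (fun n => div_card_mono n (minEdges_mono_p h1 h2))

lemma tDensity_mono_q {q q' p : ℕ} (h1 : q ≤ q') (h2 : p ≤ q) :
    tDensity 3 q' p ≤ tDensity 3 q p := by
  show (⨆ n : ℕ, (minEdges 3 n q' p : ℝ) / (n.choose 3))
      ≤ ⨆ n : ℕ, (minEdges 3 n q p : ℝ) / (n.choose 3)
  exact ciSup_mono (bddA q p h2) (fun n => div_card_mono n (minEdges_mono_q h1 h2))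

end LocalTuranAux

/-- Assuming t_3(7,4) = 1/4 and t̃_3(2) = 1/4, for every 2 ≤ γ < 7/3 one has
t̃_3(γ) = 1/4. -/
theorem tendsto_local_turan_density_three (h74 : tDensity 3 7 4 = 1/4)
    (hconv : Tendsto (fun q : ℕ => tDensity 3 q ⌈(q : ℝ) / 2⌉₊) atTop (nhds (1/4)))
    (γ : ℝ) (hγ1 : 2 ≤ γ) (hγ2 : γ < 7/3) :
    Tendsto (fun q : ℕ => tDensity 3 q ⌈(q : ℝ) / γ⌉₊) atTop (nhds (1/4)) := by
  have hγ0 : (0:ℝ) < γ := by linarith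
  apply tendsto_of_tendsto_of_tendsto_of_le_of_le'
    (tendsto_const_nhds : Tendsto (fun _ : ℕ => (1/4:ℝ)) atTop (nhds (1/4))) hconv
  · -- eventual lower bound 1/4 ≤ t(q, ⌈q/γ⌉)
    have hδ : (0:ℝ) < 1/γ - 3/7 := by
      have h7 : (3:ℝ)/7 < 1/γ := by
        rw [div_lt_div_iff₀ (by norm_num) hγ0]
        linarith
      linarith
    set δ : ℝ := 1/γ - 3/7 with hδdef
    filter_upwards [eventually_ge_atTop (max 1 ⌈4/δ⌉₊)] with q hq
    have hq1 : 1 ≤ q := le_trans (le_max_left _ _) hq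
    have hqR : (4:ℝ)/δ ≤ (q:ℝ) := by
      have h2 : ⌈4/δ⌉₊ ≤ q := le_trans (le_max_right _ _) hq
      calc (4:ℝ)/δ ≤ (⌈4/δ⌉₊ : ℝ) := Nat.le_ceil _
        _ ≤ (q:ℝ) := Nat.cast_le.mpr h2
    set k : ℕ := q / 7 + 1 with hkdef
    have hkey : ((3 * k + 1 : ℕ) : ℝ) ≤ (q:ℝ) / γ := by
      have hfloor : ((q / 7 : ℕ) : ℝ) ≤ (q:ℝ) / 7 := Nat.cast_div_le
      have h4 : (4:ℝ) ≤ (q:ℝ) * δ := by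
        calc (4:ℝ) = (4/δ) * δ := by field_simp
          _ ≤ (q:ℝ) * δ := mul_le_mul_of_nonneg_right hqR (le_of_lt hδ)
      have hγeq : (q:ℝ) * δ + 3*(q:ℝ)/7 = (q:ℝ)/γ := by
        rw [hδdef]
        field_simp
        ring
      rw [hkdef, ← hγeq]
      push_cast
      have h5 : 3 * ((q / 7 : ℕ) : ℝ) ≤ 3 * ((q:ℝ) / 7) := by linarith
      clear_value δ k
      nlinarith [h4, h5]
    have h3k1p : 3 * k + 1 ≤ ⌈(q:ℝ)/γ⌉₊ := by
      have := le_trans hkey (Nat.le_ceil ((q:ℝ)/γ))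
      exact_mod_cast this
    have hpq : ⌈(q:ℝ)/γ⌉₊ ≤ q := by
      rw [Nat.ceil_le]
      exact div_le_self (by positivity) (by linarith)
    have hq7k : q ≤ 7 * k := by
      have h1 := Nat.div_add_mod q 7
      have h2 := Nat.mod_lt q (by norm_num : 0 < 7)
      omega
    calc (1/4 : ℝ) ≤ tDensity 3 (7*k) (3*k+1) := LocalTuranAux.core h74 k (by omega)
      _ ≤ tDensity 3 q (3*k+1) :=
          LocalTuranAux.tDensity_mono_q hq7k (le_trans h3k1p hpq)
      _ ≤ tDensity 3 q ⌈(q:ℝ)/γ⌉₊ := LocalTuranAux.tDensity_mono_p h3k1p hpq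
  · -- eventual upper bound t(q, ⌈q/γ⌉) ≤ t(q, ⌈q/2⌉)
    apply Filter.Eventually.of_forall
    intro q
    apply LocalTuranAux.tDensity_mono_p
    · exact Nat.ceil_le_ceil
        (div_le_div_of_nonneg_left (by positivity) (by norm_num) hγ1)
    · rw [Nat.ceil_le]
      exact div_le_self (by positivity) (by norm_num)
end

section
/- Let r ≥ 3, k ≥ 1 and m ≥ 1 be integers, and let γ be a real number with γ ≥ k + m/(m+1). Then limsup_{q→∞} t_r(q, ⌈q/γ⌉) ≤ ( k − 1 + (2m+1)·((m+1)^r − m^r)^{−1/(r−1)} )^{−(r−1)}. -/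
open Filter Topology

section Helpers

lemma cyc_exists_transition {n : ℕ} [NeZero n] (s : Finset (ZMod n)) (a b : ZMod n)
    (ha : a ∈ s) (hb : b ∉ s) : ∃ j ∈ s, j - 1 ∉ s := by
  by_contra h
  push_neg at h
  have key : ∀ t : ℕ, a - (t : ZMod n) ∈ s := by
    intro t
    induction t with
    | zero => simpa using ha
    | succ t ih =>
      have := h _ ih
      have e : a - ((t+1 : ℕ) : ZMod n) = a - (t : ZMod n) - 1 := by
        push_cast; ring
      rw [e]; exact this
  have : b ∈ s := by
    have := key ((a - b).val)
    rwa [ZMod.natCast_rightInverse _, sub_sub_cancel] at this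
  exact hb this

lemma tendsto_choose_ratio (r : ℕ) (a : ℕ → ℕ) (c : ℝ) (hc : 0 < c)
    (h : Tendsto (fun n => (a n : ℝ) / n) atTop (𝓝 c)) :
    Tendsto (fun n => ((a n).choose r : ℝ) / (n.choose r)) atTop (𝓝 (c ^ r)) := by
  have hidiv : ∀ i : ℕ, Tendsto (fun n : ℕ => (i : ℝ) / n) atTop (𝓝 0) := fun i =>
    tendsto_const_nhds.div_atTop (tendsto_natCast_atTop_atTop)
  have hfac : ∀ i : ℕ,
      Tendsto (fun n => ((a n : ℝ) - i) / ((n : ℝ) - i)) atTop (𝓝 c) := by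
    intro i
    have h1 : Tendsto (fun n : ℕ => ((a n : ℝ) - i) / n) atTop (𝓝 c) := by
      have := h.sub (hidiv i)
      simpa [sub_div] using this
    have h3 : Tendsto (fun n : ℕ => ((n : ℝ) - i) / n) atTop (𝓝 1) := by
      have h4 : Tendsto (fun n : ℕ => (n : ℝ) / n) atTop (𝓝 1) := by
        have hcn : Tendsto (fun _ : ℕ => (1:ℝ)) atTop (𝓝 1) := tendsto_const_nhds
        apply Tendsto.congr' _ hcn
        filter_upwards [eventually_gt_atTop 0] with n hn
        have : (n:ℝ) ≠ 0 := by positivity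
        exact (div_self this).symm
      have := h4.sub (hidiv i)
      simpa [sub_div] using this
    have h5 := h1.div h3 one_ne_zero
    apply Tendsto.congr' _ (by simpa using h5)
    filter_upwards [eventually_gt_atTop 0] with n hn
    have hn' : (n:ℝ) ≠ 0 := by positivity
    show ((↑(a n) - (i:ℝ)) / ↑n) / ((↑n - (i:ℝ)) / ↑n) = _
    field_simp
  have hprod : Tendsto (fun n => ∏ i ∈ Finset.range r, ((a n : ℝ) - i) / ((n : ℝ) - i))
      atTop (𝓝 (c ^ r)) := by
    have := tendsto_finset_prod (f := fun (i : ℕ) (n : ℕ) => ((a n : ℝ) - i) / ((n : ℝ) - i))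
      (x := atTop) (a := fun _ => c) (Finset.range r) (fun i _ => hfac i)
    simpa using this
  have ha_top : Tendsto (fun n => (a n : ℝ)) atTop atTop := by
    have h6 : Tendsto (fun n : ℕ => ((a n : ℝ) / n) * n) atTop atTop :=
      h.pos_mul_atTop hc (tendsto_natCast_atTop_atTop)
    apply Tendsto.congr' _ h6
    filter_upwards [eventually_gt_atTop 0] with n hn
    have hn' : (n:ℝ) ≠ 0 := by positivity
    field_simp
  have hev : (fun n => ∏ i ∈ Finset.range r, ((a n : ℝ) - i) / ((n : ℝ) - i))
      =ᶠ[atTop] (fun n => ((a n).choose r : ℝ) / (n.choose r)) := by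
    have hev1 : ∀ᶠ n in atTop, r ≤ a n := by
      have := ha_top.eventually_ge_atTop (r : ℝ)
      filter_upwards [this] with n hn
      exact_mod_cast hn
    filter_upwards [hev1, eventually_ge_atTop r] with n hn1 hn2
    have key : ∀ b : ℕ, r ≤ b → ((b.choose r : ℝ) * (r.factorial)) = ∏ i ∈ Finset.range r, ((b : ℝ) - i) := by
      intro b hb
      have hd := Nat.descFactorial_eq_factorial_mul_choose b r
      have h2 : (b.descFactorial r : ℝ) = ∏ i ∈ Finset.range r, ((b : ℝ) - i) := by
        rw [Nat.descFactorial_eq_prod_range]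
        push_cast [Finset.prod_natCast]
        apply Finset.prod_congr rfl
        intro i hi
        have : i ≤ b := le_trans (le_of_lt (Finset.mem_range.1 hi)) hb
        rw [Nat.cast_sub this]
      rw [← h2, hd]
      push_cast; ring
    have k1 := key _ hn1
    have k2 := key _ hn2
    have hch : (0:ℝ) < (n.choose r : ℝ) := by
      exact_mod_cast Nat.choose_pos hn2
    have hfa : (0:ℝ) < (r.factorial : ℝ) := by exact_mod_cast r.factorial_pos
    rw [Finset.prod_div_distrib, ← k1, ← k2]
    field_simp
  exact Tendsto.congr' hev hprod

lemma ceil_ratio_tendsto (c : ℝ) (hc : 0 ≤ c) :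
    Filter.Tendsto (fun n : ℕ => ((⌈c * n⌉₊ : ℝ)) / n) atTop (𝓝 c) := by
  have hlow : ∀ᶠ n : ℕ in atTop, c ≤ ((⌈c * n⌉₊ : ℝ)) / n := by
    filter_upwards [eventually_gt_atTop 0] with n hn
    have hn' : (0:ℝ) < n := by exact_mod_cast hn
    rw [le_div_iff₀ hn']
    exact Nat.le_ceil _
  have hhigh : ∀ᶠ n : ℕ in atTop, ((⌈c * n⌉₊ : ℝ)) / n ≤ c + 1/n := by
    filter_upwards [eventually_gt_atTop 0] with n hn
    have hn' : (0:ℝ) < n := by exact_mod_cast hn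
    rw [div_le_iff₀ hn']
    have := Nat.ceil_lt_add_one (by positivity : (0:ℝ) ≤ c * n)
    have hexp : (c + 1/n) * n = c * n + 1 := by field_simp
    rw [hexp]
    linarith
  have hup : Filter.Tendsto (fun n : ℕ => c + 1/n) atTop (𝓝 c) := by
    have h1 : Filter.Tendsto (fun n : ℕ => 1/(n:ℝ)) atTop (𝓝 0) :=
      tendsto_const_nhds.div_atTop tendsto_natCast_atTop_atTop
    have h2 : Filter.Tendsto (fun _ : ℕ => c) atTop (𝓝 c) := tendsto_const_nhds
    have := h2.add h1
    simpa using this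
  exact tendsto_of_tendsto_of_tendsto_of_le_of_le' tendsto_const_nhds hup hlow hhigh

lemma construction_exists (r k m A B q p : ℕ) (hr : 3 ≤ r) (hk : 1 ≤ k) (hm : 1 ≤ m)
    (hA : 0 < A) (hB : 0 < B) (hq0 : 1 ≤ q)
    (hq : (p - 1) * ((k-1)*(m+1) + (2*m+1)) < q * (m+1)) :
    ∃ G : Finset (Finset (Fin ((2*m+1)*B + (k-1)*A))),
      (∀ e ∈ G, e.card = r) ∧ HasLocalProperty G r q p ∧
      G.card ≤ (k-1) * A.choose r
        + (2*m+1) * (((m+1)*B).choose r - (m*B).choose r) := by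
  classical
  haveI : NeZero (2*m+1) := ⟨by omega⟩
  set N := (2*m+1)*B + (k-1)*A with hN
  -- block index of a vertex
  set bIdx : Fin N → ZMod (2*m+1) := fun v => ((v.val / B : ℕ) : ZMod (2*m+1)) with hbIdx
  set block : ZMod (2*m+1) → Finset (Fin N) :=
    fun b => Finset.univ.filter (fun v => v.val < (2*m+1)*B ∧ bIdx v = b) with hblock
  set W : ZMod (2*m+1) → Finset (Fin N) :=
    fun j => Finset.univ.filter
      (fun v => v.val < (2*m+1)*B ∧ ∃ t ∈ Finset.range (m+1), bIdx v = j + (t : ZMod (2*m+1)))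
      with hW
  set K : ℕ → Finset (Fin N) :=
    fun i => Finset.univ.filter
      (fun v => (2*m+1)*B ≤ v.val ∧ (v.val - (2*m+1)*B) / A = i) with hK
  set G : Finset (Finset (Fin N)) := (Finset.powersetCard r Finset.univ).filter
      (fun e => (∃ i < k-1, e ⊆ K i) ∨ (∃ j : ZMod (2*m+1), e ⊆ W j)) with hG
  have hWmem : ∀ (j : ZMod (2*m+1)) (v : Fin N), v ∈ W j ↔
      (v.val < (2*m+1)*B ∧ ∃ t, t < m+1 ∧ bIdx v = j + (t : ZMod (2*m+1))) := by
    intro j v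
    simp [hW, Finset.mem_filter]
  have hKmem : ∀ (i : ℕ) (v : Fin N), v ∈ K i ↔
      ((2*m+1)*B ≤ v.val ∧ (v.val - (2*m+1)*B) / A = i) := by
    intro i v
    simp [hK, Finset.mem_filter]
  have hGmem : ∀ e : Finset (Fin N), e ∈ G ↔
      (e.card = r ∧ ((∃ i < k-1, e ⊆ K i) ∨ (∃ j : ZMod (2*m+1), e ⊆ W j))) := by
    intro e
    simp [hG, Finset.mem_filter, Finset.mem_powersetCard_univ]
  refine ⟨G, ?_, ?_, ?_⟩
  · intro e he
    exact ((hGmem e).1 he).1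
  · -- the (q,p)-property
    intro A' hA'
    by_cases hp0 : p = 0
    · refine ⟨∅, Finset.empty_subset _, by simp [hp0], ?_⟩
      intro e he hec
      have he' : e = ∅ := Finset.subset_empty.1 he
      subst he'; simp at hec; omega
    have hp1 : 1 ≤ p := Nat.one_le_iff_ne_zero.2 hp0
    have main : (∃ i < k-1, p ≤ (A'.filter (· ∈ K i)).card) ∨
        (∃ j : ZMod (2*m+1), p ≤ (A'.filter (· ∈ W j)).card) := by
      by_contra hcon
      push_neg at hcon
      obtain ⟨hc1, hc2⟩ := hcon
      set φ : Fin N → ℕ :=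
        fun v => if v.val < (2*m+1)*B then 0 else 1 + (v.val - (2*m+1)*B)/A with hφ
      have hmap : ∀ v ∈ A', φ v ∈ Finset.range k := by
        intro v _
        simp only [hφ, Finset.mem_range]
        split
        · omega
        · rename_i hv
          have hv' : v.val < N := v.isLt
          have := (Nat.div_lt_iff_lt_mul hA).2 (by omega : v.val - (2*m+1)*B < (k-1)*A)
          omega
      have hcount := Finset.card_eq_sum_card_fiberwise hmap
      rw [hA'] at hcount
      have hsplit : q = ∑ i ∈ Finset.range (k-1), (A'.filter (fun v => φ v = i+1)).card
          + (A'.filter (fun v => φ v = 0)).card := by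
        have hk' : k = (k-1) + 1 := by omega
        rw [hcount, hk', Finset.sum_range_succ']
        simp
      -- clique fibers are small
      have e1 : ∑ i ∈ Finset.range (k-1), (A'.filter (fun v => φ v = i+1)).card
          ≤ (k-1) * (p-1) := by
        calc ∑ i ∈ Finset.range (k-1), (A'.filter (fun v => φ v = i+1)).card
            ≤ ∑ i ∈ Finset.range (k-1), (p-1) := by
              apply Finset.sum_le_sum
              intro i hi
              have hsub : A'.filter (fun v => φ v = i+1) ⊆ A'.filter (· ∈ K i) := by
                intro v hv
                rw [Finset.mem_filter] at hv ⊢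
                refine ⟨hv.1, ?_⟩
                have h2 := hv.2
                simp only [hφ] at h2
                rw [hKmem]
                by_cases hb : v.val < (2*m+1)*B
                · rw [if_pos hb] at h2; omega
                · rw [if_neg hb] at h2
                  exact ⟨by omega, by omega⟩
              have := Finset.card_le_card hsub
              have h3 := hc1 i (Finset.mem_range.1 hi)
              omega
          _ = (k-1) * (p-1) := by rw [Finset.sum_const, Finset.card_range, smul_eq_mul]
      -- double counting the block part
      have hdc : (m+1) * (A'.filter (fun v => φ v = 0)).card
          = ∑ j : ZMod (2*m+1), (A'.filter (· ∈ W j)).card := by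
        have h1 : ∀ j : ZMod (2*m+1), (A'.filter (· ∈ W j)).card
            = ∑ v ∈ A', if v ∈ W j then 1 else 0 := by
          intro j; rw [Finset.card_filter]
        rw [Finset.sum_congr rfl (fun j _ => h1 j), Finset.sum_comm]
        have h2 : ∀ v ∈ A', (∑ j : ZMod (2*m+1), if v ∈ W j then 1 else 0)
            = if v.val < (2*m+1)*B then (m+1) else 0 := by
          intro v _
          rw [← Finset.card_filter]
          by_cases hb : v.val < (2*m+1)*B
          · rw [if_pos hb]
            have h3 : Finset.univ.filter (fun j => v ∈ W j)
                = Finset.image (fun t : ℕ => bIdx v - t) (Finset.range (m+1)) := by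
              ext j
              simp only [Finset.mem_filter, Finset.mem_univ, true_and, Finset.mem_image,
                Finset.mem_range]
              rw [hWmem]
              constructor
              · rintro ⟨-, t, ht, hte⟩
                exact ⟨t, ht, by rw [hte]; ring⟩
              · rintro ⟨t, ht, rfl⟩
                exact ⟨hb, t, ht, by ring⟩
            rw [h3, Finset.card_image_of_injOn, Finset.card_range]
            intro t1 ht1 t2 ht2 hee
            have hc : (t1 : ZMod (2*m+1)) = (t2 : ZMod (2*m+1)) := sub_right_injective hee
            have hv1 := ZMod.val_cast_of_lt
              (by simp at ht1; omega : t1 < 2*m+1)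
            have hv2 := ZMod.val_cast_of_lt
              (by simp at ht2; omega : t2 < 2*m+1)
            rw [← hv1, ← hv2, hc]
          · rw [if_neg hb]
            rw [Finset.card_eq_zero, Finset.filter_eq_empty_iff]
            intro j _
            rw [hWmem]
            push_neg
            intro h
            exact absurd h hb
        rw [Finset.sum_congr rfl h2]
        rw [Finset.sum_ite, Finset.sum_const, Finset.sum_const]
        simp only [smul_eq_mul, mul_zero, add_zero]
        rw [mul_comm]
        have hfeq : Finset.filter (fun v => φ v = 0) A'
            = Finset.filter (fun x : Fin N => x.val < (2*m+1)*B) A' := by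
          ext v
          simp only [Finset.mem_filter, hφ]
          by_cases hb : v.val < (2*m+1)*B <;> simp [hb]
        rw [hfeq]
      have e2 : ∑ j : ZMod (2*m+1), (A'.filter (· ∈ W j)).card ≤ (2*m+1) * (p-1) := by
        calc ∑ j : ZMod (2*m+1), (A'.filter (· ∈ W j)).card
            ≤ ∑ _j : ZMod (2*m+1), (p-1) := by
              apply Finset.sum_le_sum
              intro j _
              have := hc2 j
              omega
          _ = (2*m+1) * (p-1) := by
              rw [Finset.sum_const, smul_eq_mul, Finset.card_univ, ZMod.card]
      -- contradiction
      have final : q * (m+1) ≤ (p-1) * ((k-1)*(m+1) + (2*m+1)) := by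
        calc q * (m+1)
            = (∑ i ∈ Finset.range (k-1), (A'.filter (fun v => φ v = i+1)).card) * (m+1)
              + (m+1) * (A'.filter (fun v => φ v = 0)).card := by rw [hsplit]; ring
          _ ≤ ((k-1) * (p-1)) * (m+1) + (2*m+1) * (p-1) := by
              rw [hdc]
              exact add_le_add (Nat.mul_le_mul_right _ e1) e2
          _ = (p-1) * ((k-1)*(m+1) + (2*m+1)) := by ring
      exact absurd hq (not_lt.2 final)
    -- extract the p-subset
    rcases main with ⟨i, hi, hple⟩ | ⟨j, hple⟩
    · obtain ⟨B₀, hB₀s, hB₀card⟩ := Finset.exists_subset_card_eq hple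
      refine ⟨B₀, hB₀s.trans (Finset.filter_subset _ _), hB₀card, ?_⟩
      intro e he hec
      refine (hGmem e).2 ⟨hec, Or.inl ⟨i, hi, ?_⟩⟩
      intro v hv
      exact (Finset.mem_filter.1 (hB₀s (he hv))).2
    · obtain ⟨B₀, hB₀s, hB₀card⟩ := Finset.exists_subset_card_eq hple
      refine ⟨B₀, hB₀s.trans (Finset.filter_subset _ _), hB₀card, ?_⟩
      intro e he hec
      refine (hGmem e).2 ⟨hec, Or.inr ⟨j, ?_⟩⟩
      intro v hv
      exact (Finset.mem_filter.1 (hB₀s (he hv))).2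
  · -- counting
    have hblockmem : ∀ (b : ZMod (2*m+1)) (v : Fin N), v ∈ block b ↔
        (v.val < (2*m+1)*B ∧ bIdx v = b) := by
      intro b v
      simp [hblock, Finset.mem_filter]
    -- block cards
    have blockUB : ∀ b : ZMod (2*m+1), (block b).card ≤ B := by
      intro b
      rw [← Finset.card_range B]
      apply Finset.card_le_card_of_injOn (fun v : Fin N => v.val % B)
      · intro v _
        exact Finset.mem_range.2 (Nat.mod_lt _ hB)
      · intro v1 h1 v2 h2 he
        obtain ⟨h11, h12⟩ := (hblockmem b v1).1 h1
        obtain ⟨h21, h22⟩ := (hblockmem b v2).1 h2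
        have hd1 : v1.val / B < 2*m+1 := (Nat.div_lt_iff_lt_mul hB).2 h11
        have hd2 : v2.val / B < 2*m+1 := (Nat.div_lt_iff_lt_mul hB).2 h21
        have hdeq : v1.val / B = v2.val / B := by
          have h := h12.trans h22.symm
          simp only [hbIdx] at h
          have h' := congrArg ZMod.val h
          rwa [ZMod.val_cast_of_lt hd1, ZMod.val_cast_of_lt hd2] at h'
        have he' : v1.val % B = v2.val % B := by simpa using he
        apply Fin.ext
        rw [← Nat.div_add_mod v1.val B, ← Nat.div_add_mod v2.val B, hdeq, he']
    have blockLB : ∀ b : ZMod (2*m+1), B ≤ (block b).card := by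
      intro b
      have hNpos : 0 < N := by
        have : 0 < (2*m+1)*B := by positivity
        omega
      conv_lhs => rw [← Finset.card_range B]
      apply Finset.card_le_card_of_injOn
        (fun x : ℕ => (⟨(b.val * B + x) % N, Nat.mod_lt _ hNpos⟩ : Fin N))
      · intro x hx
        have hx' := Finset.mem_range.1 hx
        have hbval : b.val < 2*m+1 := b.val_lt
        have hmul : (b.val+1)*B ≤ (2*m+1)*B := Nat.mul_le_mul_right _ (by omega)
        have hring : (b.val+1)*B = b.val*B + B := by ring
        have hlt : b.val * B + x < (2*m+1)*B := by omega
        have hltN : b.val * B + x < N := by omega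
        rw [Finset.mem_coe, hblockmem]
        simp only [Nat.mod_eq_of_lt hltN]
        refine ⟨hlt, ?_⟩
        simp only [hbIdx]
        have hdiv : (b.val * B + x) / B = b.val := by
          rw [Nat.mul_comm b.val B, Nat.mul_add_div hB, Nat.div_eq_of_lt hx', Nat.add_zero]
        rw [hdiv]
        exact ZMod.natCast_rightInverse b
      · intro x1 hx1 x2 hx2 he
        have hx1' := Finset.mem_range.1 hx1
        have hx2' := Finset.mem_range.1 hx2
        have hbval : b.val < 2*m+1 := b.val_lt
        have hmul : (b.val+1)*B ≤ (2*m+1)*B := Nat.mul_le_mul_right _ (by omega)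
        have hring : (b.val+1)*B = b.val*B + B := by ring
        have hl1 : b.val * B + x1 < N := by omega
        have hl2 : b.val * B + x2 < N := by omega
        have hval : (b.val * B + x1) % N = (b.val * B + x2) % N := congrArg Fin.val he
        rw [Nat.mod_eq_of_lt hl1, Nat.mod_eq_of_lt hl2] at hval
        omega
    -- clique cards
    have hKA : ∀ i : ℕ, (K i).card ≤ A := by
      intro i
      rw [← Finset.card_range A]
      apply Finset.card_le_card_of_injOn (fun v : Fin N => v.val - ((2*m+1)*B + i*A))
      · intro v hv
        obtain ⟨h1, h2⟩ := (hKmem i v).1 hv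
        have h1le : i*A ≤ v.val - (2*m+1)*B := by
          have := Nat.div_mul_le_self (v.val - (2*m+1)*B) A
          rwa [h2] at this
        have h2lt : v.val - (2*m+1)*B < (i+1)*A :=
          (Nat.div_lt_iff_lt_mul hA).1 (by rw [h2]; exact Nat.lt_succ_self i)
        have hring : (i+1)*A = i*A + A := by ring
        exact Finset.mem_range.2 (by dsimp only; omega)
      · intro v1 hv1 v2 hv2 he
        obtain ⟨h11, h12⟩ := (hKmem i v1).1 hv1
        obtain ⟨h21, h22⟩ := (hKmem i v2).1 hv2
        have h1le : i*A ≤ v1.val - (2*m+1)*B := by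
          have := Nat.div_mul_le_self (v1.val - (2*m+1)*B) A
          rwa [h12] at this
        have h2le : i*A ≤ v2.val - (2*m+1)*B := by
          have := Nat.div_mul_le_self (v2.val - (2*m+1)*B) A
          rwa [h22] at this
        have he' : v1.val - ((2*m+1)*B + i*A) = v2.val - ((2*m+1)*B + i*A) := by
          simpa using he
        apply Fin.ext
        omega
    -- window upper bound
    have hWB : ∀ j : ZMod (2*m+1), (W j).card ≤ (m+1)*B := by
      intro j
      have hsub : W j ⊆ (Finset.range (m+1)).biUnion (fun t => block (j + (t : ZMod (2*m+1)))) := by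
        intro v hv
        obtain ⟨h1, t, ht, hte⟩ := (hWmem j v).1 hv
        exact Finset.mem_biUnion.2 ⟨t, Finset.mem_range.2 ht, (hblockmem _ v).2 ⟨h1, hte⟩⟩
      calc (W j).card ≤ ((Finset.range (m+1)).biUnion
              (fun t => block (j + (t : ZMod (2*m+1))))).card := Finset.card_le_card hsub
        _ ≤ ∑ t ∈ Finset.range (m+1), (block (j + (t : ZMod (2*m+1)))).card :=
            Finset.card_biUnion_le
        _ ≤ ∑ _t ∈ Finset.range (m+1), B := Finset.sum_le_sum (fun t _ => blockUB _)
        _ = (m+1)*B := by rw [Finset.sum_const, Finset.card_range, smul_eq_mul]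
    -- intersection lower bound
    have hIB : ∀ j : ZMod (2*m+1), m*B ≤ (W j ∩ W (j-1)).card := by
      intro j
      have hsub : (Finset.range m).biUnion (fun t => block (j + (t : ZMod (2*m+1))))
          ⊆ W j ∩ W (j-1) := by
        intro v hv
        obtain ⟨t, ht, hvb⟩ := Finset.mem_biUnion.1 hv
        have ht' := Finset.mem_range.1 ht
        obtain ⟨h1, h2⟩ := (hblockmem _ v).1 hvb
        refine Finset.mem_inter.2 ⟨(hWmem j v).2 ⟨h1, t, by omega, h2⟩, ?_⟩
        refine (hWmem (j-1) v).2 ⟨h1, t+1, by omega, ?_⟩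
        rw [h2]
        push_cast
        ring
      have hdisj : ∀ t1 ∈ (Finset.range m), ∀ t2 ∈ Finset.range m, t1 ≠ t2 →
          Disjoint (block (j + (t1 : ZMod (2*m+1)))) (block (j + (t2 : ZMod (2*m+1)))) := by
        intro t1 ht1 t2 ht2 hne
        rw [Finset.disjoint_left]
        intro v hv1 hv2
        obtain ⟨-, h1⟩ := (hblockmem _ v).1 hv1
        obtain ⟨-, h2⟩ := (hblockmem _ v).1 hv2
        have hc : (t1 : ZMod (2*m+1)) = (t2 : ZMod (2*m+1)) := by
          have := h1.symm.trans h2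
          exact add_left_cancel this
        have ht1' := Finset.mem_range.1 ht1
        have ht2' := Finset.mem_range.1 ht2
        apply hne
        rw [← ZMod.val_cast_of_lt (by omega : t1 < 2*m+1),
          ← ZMod.val_cast_of_lt (by omega : t2 < 2*m+1), hc]
      calc m*B = ∑ _t ∈ Finset.range m, B := by
            rw [Finset.sum_const, Finset.card_range, smul_eq_mul]
        _ ≤ ∑ t ∈ Finset.range m, (block (j + (t : ZMod (2*m+1)))).card :=
            Finset.sum_le_sum (fun t _ => blockLB _)
        _ = ((Finset.range m).biUnion (fun t => block (j + (t : ZMod (2*m+1))))).card :=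
            (Finset.card_biUnion hdisj).symm
        _ ≤ (W j ∩ W (j-1)).card := Finset.card_le_card hsub
    -- cover
    have hcover : G ⊆ (Finset.range (k-1)).biUnion (fun i => Finset.powersetCard r (K i))
        ∪ (Finset.univ : Finset (ZMod (2*m+1))).biUnion
            (fun j => Finset.powersetCard r (W j) \ Finset.powersetCard r (W (j-1))) := by
      intro e he
      obtain ⟨hec, hcases⟩ := (hGmem e).1 he
      rcases hcases with ⟨i, hi, hsub⟩ | ⟨j, hsub⟩
      · exact Finset.mem_union_left _ (Finset.mem_biUnion.2
          ⟨i, Finset.mem_range.2 hi, Finset.mem_powersetCard.2 ⟨hsub, hec⟩⟩)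
      · apply Finset.mem_union_right
        set s : Finset (ZMod (2*m+1)) := Finset.univ.filter (fun j' => e ⊆ W j') with hs
        have hjs : j ∈ s := Finset.mem_filter.2 ⟨Finset.mem_univ _, hsub⟩
        have hene : e.Nonempty := by
          rw [← Finset.card_pos, hec]; omega
        obtain ⟨v, hv⟩ := hene
        have hbad : bIdx v + 1 ∉ s := by
          intro hmem
          have hsub' := (Finset.mem_filter.1 hmem).2
          obtain ⟨-, t, ht, hte⟩ := (hWmem (bIdx v + 1) v).1 (hsub' hv)
          have h0 : ((1 + t : ℕ) : ZMod (2*m+1)) = 0 := by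
            push_cast
            linear_combination -hte
          rw [ZMod.natCast_eq_zero_iff] at h0
          have := Nat.le_of_dvd (by omega) h0
          omega
        obtain ⟨j', hj's, hj'1⟩ := cyc_exists_transition s j (bIdx v + 1) hjs hbad
        refine Finset.mem_biUnion.2 ⟨j', Finset.mem_univ _, ?_⟩
        rw [Finset.mem_sdiff]
        refine ⟨Finset.mem_powersetCard.2 ⟨(Finset.mem_filter.1 hj's).2, hec⟩, ?_⟩
        intro hcon
        exact hj'1 (Finset.mem_filter.2 ⟨Finset.mem_univ _, (Finset.mem_powersetCard.1 hcon).1⟩)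
    -- per-window sdiff bound
    have hFj : ∀ j : ZMod (2*m+1),
        (Finset.powersetCard r (W j) \ Finset.powersetCard r (W (j-1))).card
          ≤ ((m+1)*B).choose r - (m*B).choose r := by
      intro j
      have hsd : Finset.powersetCard r (W j) \ Finset.powersetCard r (W (j-1))
          = Finset.powersetCard r (W j) \ Finset.powersetCard r (W j ∩ W (j-1)) := by
        ext e
        simp only [Finset.mem_sdiff, Finset.mem_powersetCard]
        constructor
        · rintro ⟨⟨h1, h2⟩, h3⟩
          exact ⟨⟨h1, h2⟩, fun hcon => h3 ⟨hcon.1.trans Finset.inter_subset_right, h2⟩⟩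
        · rintro ⟨⟨h1, h2⟩, h3⟩
          exact ⟨⟨h1, h2⟩, fun hcon => h3 ⟨Finset.subset_inter h1 hcon.1, hcon.2⟩⟩
      rw [hsd, Finset.card_sdiff_of_subset (Finset.powersetCard_mono Finset.inter_subset_left),
        Finset.card_powersetCard, Finset.card_powersetCard]
      exact tsub_le_tsub (Nat.choose_le_choose r (hWB j)) (Nat.choose_le_choose r (hIB j))
    -- assemble
    calc G.card ≤ ((Finset.range (k-1)).biUnion (fun i => Finset.powersetCard r (K i))
        ∪ (Finset.univ : Finset (ZMod (2*m+1))).biUnion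
            (fun j => Finset.powersetCard r (W j) \ Finset.powersetCard r (W (j-1)))).card :=
          Finset.card_le_card hcover
      _ ≤ ((Finset.range (k-1)).biUnion (fun i => Finset.powersetCard r (K i))).card
          + ((Finset.univ : Finset (ZMod (2*m+1))).biUnion
            (fun j => Finset.powersetCard r (W j) \ Finset.powersetCard r (W (j-1)))).card :=
          Finset.card_union_le _ _
      _ ≤ (∑ i ∈ Finset.range (k-1), (Finset.powersetCard r (K i)).card)
          + (∑ j : ZMod (2*m+1),
              (Finset.powersetCard r (W j) \ Finset.powersetCard r (W (j-1))).card) :=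
          Nat.add_le_add Finset.card_biUnion_le Finset.card_biUnion_le
      _ ≤ (∑ _i ∈ Finset.range (k-1), A.choose r)
          + (∑ _j : ZMod (2*m+1), (((m+1)*B).choose r - (m*B).choose r)) := by
          apply Nat.add_le_add
          · apply Finset.sum_le_sum
            intro i _
            rw [Finset.card_powersetCard]
            exact Nat.choose_le_choose r (hKA i)
          · exact Finset.sum_le_sum (fun j _ => hFj j)
      _ = (k-1) * A.choose r + (2*m+1) * (((m+1)*B).choose r - (m*B).choose r) := by
          rw [Finset.sum_const, Finset.sum_const, Finset.card_range, Finset.card_univ, ZMod.card]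
          simp [smul_eq_mul]

lemma minEdges_le_of_construction (r q p n N : ℕ) (h : n ≤ N)
    (G : Finset (Finset (Fin N))) (hc : ∀ e ∈ G, e.card = r)
    (hp : HasLocalProperty G r q p) : minEdges r n q p ≤ G.card := by
  classical
  set emb : Fin n ↪ Fin N := Fin.castLEEmb h with hemb
  set G' : Finset (Finset (Fin n)) := (Finset.powersetCard r Finset.univ).filter
    (fun e => e.map emb ∈ G) with hG'
  have hcard' : ∀ e ∈ G', e.card = r := by
    intro e he
    exact Finset.mem_powersetCard_univ.1 (Finset.mem_filter.1 he).1
  have hprop' : HasLocalProperty G' r q p := by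
    intro A₁ hA₁
    obtain ⟨B₂, hB₂sub, hB₂card, hB₂cl⟩ := hp (A₁.map emb) (by rw [Finset.card_map, hA₁])
    obtain ⟨B₁, hB₁sub, rfl⟩ := Finset.subset_map_iff.1 hB₂sub
    refine ⟨B₁, hB₁sub, by rwa [Finset.card_map] at hB₂card, ?_⟩
    intro e he hec
    have h1 : e.map emb ⊆ B₁.map emb := Finset.map_subset_map.2 he
    have h2 := hB₂cl (e.map emb) h1 (by rw [Finset.card_map]; exact hec)
    exact Finset.mem_filter.2 ⟨Finset.mem_powersetCard_univ.2 hec, h2⟩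
  have hle : G'.card ≤ G.card := by
    apply Finset.card_le_card_of_injOn (fun e => e.map emb)
    · intro e he
      exact (Finset.mem_filter.1 he).2
    · intro e1 _ e2 _ hee
      exact Finset.map_injective emb hee
  calc minEdges r n q p ≤ G'.card := Nat.sInf_le ⟨G', hcard', hprop', rfl⟩
    _ ≤ G.card := hle

lemma minEdges_eq_zero_of_lt (r q p n : ℕ) (h : n < q) : minEdges r n q p = 0 := by
  have : (0 : ℕ) ∈ {m | ∃ G : Finset (Finset (Fin n)), (∀ e ∈ G, e.card = r) ∧
      HasLocalProperty G r q p ∧ G.card = m} := by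
    refine ⟨∅, by simp, ?_, by simp⟩
    intro A hA
    exfalso
    have : A.card ≤ n := by
      simpa using Finset.card_le_univ A
    omega
  exact Nat.le_zero.1 (Nat.sInf_le this)

end Helpers


/-- Upper bound from the tight-cycle construction C^{m+1}_{2m+1} ∪ I_{k-1}:
for γ ≥ k + m/(m+1),
limsup_{q→∞} t_r(q,⌈q/γ⌉) ≤ (k−1+(2m+1)((m+1)^r−m^r)^{−1/(r−1)})^{−(r−1)}. -/
theorem limsup_local_turan_density_le_cycle (r k m : ℕ) (hr : 3 ≤ r) (hk : 1 ≤ k)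
    (hm : 1 ≤ m) (γ : ℝ) (hγ : (k : ℝ) + (m : ℝ) / ((m : ℝ) + 1) ≤ γ) :
    limsup (fun q : ℕ => tDensity r q ⌈(q : ℝ) / γ⌉₊) atTop ≤
      ((k : ℝ) - 1 + (2 * (m : ℝ) + 1) *
          (((m : ℝ) + 1) ^ r - (m : ℝ) ^ r) ^ (-(1 : ℝ) / ((r : ℝ) - 1)))
        ^ (-((r : ℝ) - 1)) := by
  classical
  have hr1 : (2:ℝ) ≤ (r:ℝ) - 1 := by
    have : (3:ℝ) ≤ (r:ℝ) := by exact_mod_cast hr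
    linarith
  have hrne : ((r:ℝ) - 1) ≠ 0 := by linarith
  have hm1 : (1:ℝ) ≤ (m:ℝ) := by exact_mod_cast hm
  have hk1 : (1:ℝ) ≤ (k:ℝ) := by exact_mod_cast hk
  set D : ℝ := ((m:ℝ)+1)^r - (m:ℝ)^r with hD
  have hDpos : 0 < D := by
    have := pow_lt_pow_left₀ (show (m:ℝ) < (m:ℝ)+1 by linarith)
      (by positivity : (0:ℝ) ≤ (m:ℝ)) (by omega : r ≠ 0)
    simpa [hD, sub_pos] using this
  set δ : ℝ := D ^ (-(1:ℝ)/((r:ℝ)-1)) with hδ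
  have hδpos : 0 < δ := Real.rpow_pos_of_pos hDpos _
  set S : ℝ := (k:ℝ) - 1 + (2*(m:ℝ)+1) * δ with hS
  have hSpos : 0 < S := by nlinarith
  set T : ℝ := S ^ (-((r:ℝ)-1)) with hT
  have hTpos : 0 < T := Real.rpow_pos_of_pos hSpos _
  show limsup (fun q : ℕ => tDensity r q ⌈(q : ℝ) / γ⌉₊) atTop ≤ T
  set u : ℝ := 1/S with hu
  set w : ℝ := δ/S with hw
  have hupos : 0 < u := by positivity
  have hwpos : 0 < w := by positivity
  -- algebraic identity
  have hδrD : δ^r * D = δ := by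
    have h1 : δ^r = D ^ ((-(1:ℝ)/((r:ℝ)-1)) * r) := by
      rw [hδ, ← Real.rpow_natCast (D ^ (-(1:ℝ)/((r:ℝ)-1))) r, ← Real.rpow_mul hDpos.le]
    calc δ^r * D = D ^ ((-(1:ℝ)/((r:ℝ)-1)) * r) * D ^ (1:ℝ) := by
          rw [Real.rpow_one, h1]
      _ = D ^ ((-(1:ℝ)/((r:ℝ)-1)) * r + 1) := (Real.rpow_add hDpos _ _).symm
      _ = D ^ (-(1:ℝ)/((r:ℝ)-1)) := by
          congr 1
          field_simp
          ring
      _ = δ := hδ.symm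
  have hTval : T = S / S^r := by
    rw [hT, show -((r:ℝ)-1) = 1 - (r:ℝ) by ring, Real.rpow_sub hSpos,
      Real.rpow_one, Real.rpow_natCast]
  have hL : ((k:ℝ)-1) * u^r
      + (2*(m:ℝ)+1) * ((((m:ℝ)+1)*w)^r - ((m:ℝ)*w)^r) = T := by
    have hwu : w = δ * u := by rw [hw, hu]; ring
    have h2 : (((m:ℝ)+1)*w)^r - ((m:ℝ)*w)^r = w^r * D := by
      rw [mul_pow, mul_pow, hD]; ring
    rw [h2]
    have hSr : (S:ℝ)^r ≠ 0 := pow_ne_zero _ hSpos.ne'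
    calc ((k:ℝ)-1) * u^r + (2*(m:ℝ)+1) * (w^r * D)
        = ((k:ℝ)-1) * u^r + (2*(m:ℝ)+1) * (δ^r * D) * u^r := by
          rw [hwu, mul_pow]; ring
      _ = ((k:ℝ)-1) * u^r + (2*(m:ℝ)+1) * δ * u^r := by rw [hδrD]
      _ = S * u^r := by rw [hS]; ring
      _ = S / S^r := by rw [hu, div_pow, one_pow]; field_simp
      _ = T := hTval.symm
  -- the pigeonhole inequality for all q ≥ 1
  have hγ0 : (0:ℝ) < γ := by
    have : (0:ℝ) < (k:ℝ) + (m:ℝ)/((m:ℝ)+1) := by positivity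
    linarith
  have hpq : ∀ q : ℕ, 1 ≤ q →
      (⌈(q:ℝ)/γ⌉₊ - 1) * ((k-1)*(m+1) + (2*m+1)) < q*(m+1) := by
    intro q hq1
    set p := ⌈(q:ℝ)/γ⌉₊ with hp
    rcases Nat.eq_zero_or_pos p with h0 | hppos
    · rw [h0]
      have hpos : 0 < q*(m+1) := Nat.mul_pos (by omega) (by omega)
      simpa using hpos
    · have hceil : (p:ℝ) < (q:ℝ)/γ + 1 := Nat.ceil_lt_add_one (by positivity)
      have hqpos : (0:ℝ) < (q:ℝ) := by exact_mod_cast hq1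
      have c1 : ((p:ℝ)-1) * γ < (q:ℝ) := by
        have h1 : ((p:ℝ)-1) < (q:ℝ)/γ := by linarith
        calc ((p:ℝ)-1)*γ < ((q:ℝ)/γ)*γ := mul_lt_mul_of_pos_right h1 hγ0
          _ = (q:ℝ) := by field_simp
      have hp1R : (1:ℝ) ≤ (p:ℝ) := by exact_mod_cast hppos
      have c2 : ((p:ℝ)-1) * ((k:ℝ) + (m:ℝ)/((m:ℝ)+1)) ≤ ((p:ℝ)-1)*γ :=
        mul_le_mul_of_nonneg_left hγ (by linarith)
      have hid : (((k:ℝ)-1)*((m:ℝ)+1) + (2*(m:ℝ)+1))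
          = ((k:ℝ) + (m:ℝ)/((m:ℝ)+1)) * ((m:ℝ)+1) := by
        have hmne : (m:ℝ)+1 ≠ 0 := by positivity
        field_simp
        ring
      have hkey : ((p:ℝ) - 1) * (((k:ℝ)-1)*((m:ℝ)+1) + (2*(m:ℝ)+1))
          < (q:ℝ)*((m:ℝ)+1) := by
        calc ((p:ℝ)-1) * (((k:ℝ)-1)*((m:ℝ)+1) + (2*(m:ℝ)+1))
            = (((p:ℝ)-1) * ((k:ℝ)+(m:ℝ)/((m:ℝ)+1))) * ((m:ℝ)+1) := by rw [hid]; ring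
          _ ≤ (((p:ℝ)-1)*γ) * ((m:ℝ)+1) := by
              exact mul_le_mul_of_nonneg_right c2 (by positivity)
          _ < (q:ℝ)*((m:ℝ)+1) := mul_lt_mul_of_pos_right c1 (by positivity)
      have hcast : (((p-1) * ((k-1)*(m+1) + (2*m+1)) : ℕ) : ℝ) < ((q*(m+1) : ℕ) : ℝ) := by
        push_cast [Nat.cast_sub hppos, Nat.cast_sub hk]
        convert hkey using 2
      exact_mod_cast hcast
  -- epsilon argument
  apply le_of_forall_pos_le_add
  intro ε hε
  set An : ℕ → ℕ := fun n => ⌈u * n⌉₊ with hAn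
  set Bn : ℕ → ℕ := fun n => ⌈w * n⌉₊ with hBn
  have hA : Tendsto (fun n : ℕ => ((An n : ℝ))/n) atTop (𝓝 u) := ceil_ratio_tendsto u hupos.le
  have hB : Tendsto (fun n : ℕ => ((Bn n : ℝ))/n) atTop (𝓝 w) := ceil_ratio_tendsto w hwpos.le
  have hWseq : Tendsto (fun n : ℕ => (((m+1)*Bn n : ℕ) : ℝ)/n) atTop (𝓝 (((m:ℝ)+1)*w)) := by
    have h1 := hB.const_mul ((m:ℝ)+1)
    apply Tendsto.congr' _ h1
    filter_upwards with n
    push_cast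
    ring
  have hIseq : Tendsto (fun n : ℕ => ((m*Bn n : ℕ) : ℝ)/n) atTop (𝓝 ((m:ℝ)*w)) := by
    have h1 := hB.const_mul ((m:ℝ))
    apply Tendsto.congr' _ h1
    filter_upwards with n
    push_cast
    ring
  have hρA := tendsto_choose_ratio r An u hupos hA
  have hρW := tendsto_choose_ratio r (fun n => (m+1)*Bn n) (((m:ℝ)+1)*w)
    (by positivity) hWseq
  have hρI := tendsto_choose_ratio r (fun n => m*Bn n) ((m:ℝ)*w)
    (by positivity) hIseq
  set g : ℕ → ℝ := fun n => (((k-1) * (An n).choose r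
      + (2*m+1) * ((((m+1)*(Bn n)).choose r) - ((m*(Bn n)).choose r)) : ℕ) : ℝ)
      / (n.choose r) with hgdef
  have hg : Tendsto g atTop (𝓝 T) := by
    have hEq : ∀ n, g n = ((k:ℝ)-1) * (((An n).choose r : ℝ)/(n.choose r))
        + (2*(m:ℝ)+1) * (((((m+1)*(Bn n)).choose r : ℝ))/(n.choose r)
            - (((m*(Bn n)).choose r : ℝ))/(n.choose r)) := by
      intro n
      have hsub : (m*(Bn n)).choose r ≤ ((m+1)*(Bn n)).choose r :=
        Nat.choose_le_choose r (Nat.mul_le_mul_right _ (by omega))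
      rw [hgdef]
      push_cast [Nat.cast_sub hsub, Nat.cast_sub hk]
      ring
    rw [show (𝓝 T) = 𝓝 (((k:ℝ)-1) * u^r
        + (2*(m:ℝ)+1)*((((m:ℝ)+1)*w)^r - ((m:ℝ)*w)^r)) from by rw [hL]]
    apply Tendsto.congr (fun n => (hEq n).symm)
    exact ((hρA.const_mul _).add ((hρW.sub hρI).const_mul _))
  have hev := hg.eventually_lt_const (show T < T + ε by linarith)
  obtain ⟨N₀, hN₀⟩ := eventually_atTop.1 (hev.and (eventually_ge_atTop (r+1)))
  have hfinal : ∀ᶠ (qq : ℕ) in atTop, tDensity r qq ⌈(qq:ℝ)/γ⌉₊ ≤ T + ε := by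
    filter_upwards [eventually_ge_atTop (max N₀ 1)] with qq hqq
    have hq1 : 1 ≤ qq := le_trans (le_max_right _ _) hqq
    have hqN₀ : N₀ ≤ qq := le_trans (le_max_left _ _) hqq
    rw [tDensity]
    apply ciSup_le
    intro n
    by_cases hn : n < qq
    · rw [minEdges_eq_zero_of_lt r qq _ n hn]
      simp
      linarith
    · push_neg at hn
      have hnN₀ : N₀ ≤ n := le_trans hqN₀ hn
      obtain ⟨hgn, hrn⟩ := hN₀ n hnN₀
      have hn1 : 1 ≤ n := by omega
      have hn1R : (1:ℝ) ≤ (n:ℝ) := by exact_mod_cast hn1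
      have hApos : 0 < An n := Nat.ceil_pos.2 (by positivity)
      have hBpos : 0 < Bn n := Nat.ceil_pos.2 (by positivity)
      have hnN : n ≤ (2*m+1)*(Bn n) + (k-1)*(An n) := by
        have hsum : ((k:ℝ)-1)*u + (2*(m:ℝ)+1)*w = 1 := by
          have hSne : S ≠ 0 := hSpos.ne'
          rw [hu, hw]
          rw [mul_one_div, mul_div_assoc', ← add_div, ← hS, div_self hSne]
        have e1 : u*n ≤ (An n : ℝ) := Nat.le_ceil _
        have e2 : w*n ≤ (Bn n : ℝ) := Nat.le_ceil _
        have hcast : (n:ℝ) ≤ (((2*m+1)*(Bn n) + (k-1)*(An n) : ℕ) : ℝ) := by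
          push_cast [Nat.cast_sub hk]
          calc (n:ℝ) = (((k:ℝ)-1)*u + (2*(m:ℝ)+1)*w) * n := by rw [hsum]; ring
            _ = ((k:ℝ)-1)*(u*n) + (2*(m:ℝ)+1)*(w*n) := by ring
            _ ≤ ((k:ℝ)-1)*(An n : ℝ) + (2*(m:ℝ)+1)*(Bn n : ℝ) := by
                apply add_le_add
                · exact mul_le_mul_of_nonneg_left e1 (by linarith)
                · exact mul_le_mul_of_nonneg_left e2 (by positivity)
            _ = (2*(m:ℝ)+1)*(Bn n : ℝ) + ((k:ℝ)-1)*(An n : ℝ) := by ring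
        exact_mod_cast hcast
      obtain ⟨G, hGc, hGp, hGcard⟩ := construction_exists r k m (An n) (Bn n) qq
        ⌈(qq:ℝ)/γ⌉₊ hr hk hm hApos hBpos hq1 (hpq qq hq1)
      have hminle := minEdges_le_of_construction r qq ⌈(qq:ℝ)/γ⌉₊ n _ hnN G hGc hGp
      have hMle : minEdges r n qq ⌈(qq:ℝ)/γ⌉₊ ≤ (k-1) * (An n).choose r
          + (2*m+1) * ((((m+1)*(Bn n)).choose r) - ((m*(Bn n)).choose r)) :=
        le_trans hminle hGcard
      have hchpos : (0:ℝ) < (n.choose r : ℝ) := by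
        exact_mod_cast Nat.choose_pos (by omega : r ≤ n)
      have hle2 : (minEdges r n qq ⌈(qq:ℝ)/γ⌉₊ : ℝ) / (n.choose r : ℝ) ≤ g n := by
        have hcast : (minEdges r n qq ⌈(qq:ℝ)/γ⌉₊ : ℝ)
            ≤ (((k-1) * (An n).choose r
              + (2*m+1) * ((((m+1)*(Bn n)).choose r) - ((m*(Bn n)).choose r)) : ℕ) : ℝ) := by
          exact_mod_cast hMle
        exact (div_le_div_iff_of_pos_right hchpos).2 hcast
      calc (minEdges r n qq ⌈(qq:ℝ)/γ⌉₊ : ℝ) / (n.choose r : ℝ) ≤ g n := hle2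
        _ ≤ T + ε := le_of_lt hgn
  have hnn : ∀ᶠ (qq : ℕ) in atTop, (0:ℝ) ≤ tDensity r qq ⌈(qq:ℝ)/γ⌉₊ := by
    filter_upwards with qq
    exact Real.iSup_nonneg (fun n => by positivity)
  exact limsup_le_of_le (isCoboundedUnder_le_of_eventually_le atTop hnn) hfinal
end

section
/- Let q > p ≥ r ≥ 2 be integers and let H be an r-uniform hypergraph with the (q,p)-property. If W ⊆ V(H) is a (w,v)-hole of H with w ≤ q − r, then the induced sub-hypergraph of H on V(H) ∖ W (i.e., the set of edges of H contained in V(H) ∖ W) has the (q−w, p−v)-property. -/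
/-- An r-uniform hypergraph `G` has the (q,p)-property on a vertex subset `S` if every
q-element subset `A ⊆ S` contains a p-element subset `B` such that every r-element
subset of `B` is an edge of `G`. -/
def HasPropertyOn {V : Type*} [DecidableEq V] (G : Finset (Finset V)) (S : Finset V)
    (r q p : ℕ) : Prop :=
  ∀ A ⊆ S, A.card = q → ∃ B ⊆ A, B.card = p ∧ ∀ e ⊆ B, e.card = r → e ∈ G

/-- `W` is a (w,v)-hole of the r-uniform hypergraph `G`: `|W| = w` and `v` is the
clique number of `W`, i.e. the greatest size of a subset of `W` all of whose
r-element subsets are edges of `G`. -/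
def IsHole {V : Type*} [DecidableEq V] (G : Finset (Finset V)) (W : Finset V)
    (r w v : ℕ) : Prop :=
  W.card = w ∧
    IsGreatest {u | ∃ A ⊆ W, A.card = u ∧ ∀ e ⊆ A, e.card = r → e ∈ G} v

/-- If an r-uniform hypergraph H (with q > p ≥ r ≥ 2) has the (q,p)-property and W is a
(w,v)-hole with w ≤ q − r, then the induced sub-hypergraph on V(H) ∖ W has the
(q−w, p−v)-property. -/
theorem hole_induces_property {V : Type*} [Fintype V] [DecidableEq V]
    (r q p w v : ℕ) (hr : 2 ≤ r) (hp : r ≤ p) (hq : p < q)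
    (G : Finset (Finset V)) (hunif : ∀ e ∈ G, e.card = r)
    (hprop : HasPropertyOn G Finset.univ r q p)
    (W : Finset V) (hW : IsHole G W r w v) (hwq : w ≤ q - r) :
    HasPropertyOn {e ∈ G | e ⊆ Finset.univ \ W} (Finset.univ \ W) r (q - w) (p - v) := by
  intro A hA hAcard
  have hwq' : w ≤ q := le_trans hwq (Nat.sub_le _ _)
  have hdisj : Disjoint A W := by
    intro s hsA hsW
    simp only [Finset.le_eq_subset, Finset.bot_eq_empty, Finset.subset_empty]
    ext x
    simp only [Finset.notMem_empty, iff_false]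
    intro hx
    have h1 := hA (hsA hx)
    exact (Finset.mem_sdiff.mp h1).2 (hsW hx)
  have hWcard : W.card = w := hW.1
  have hcard : (A ∪ W).card = q := by
    rw [Finset.card_union_of_disjoint hdisj, hAcard, hWcard]
    omega
  obtain ⟨B, hBsub, hBcard, hBedge⟩ := hprop (A ∪ W) (Finset.subset_univ _) hcard
  have hBW : (B ∩ W).card ≤ v := by
    apply hW.2.2
    exact ⟨B ∩ W, Finset.inter_subset_right, rfl,
      fun e he hec => hBedge e (he.trans Finset.inter_subset_left) hec⟩
  have hBdiff : p - v ≤ (B \ W).card := by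
    have := Finset.card_sdiff_add_card_inter B W
    omega
  obtain ⟨B', hB'sub, hB'card⟩ := Finset.exists_subset_card_eq hBdiff
  have hB'A : B' ⊆ A := by
    intro x hx
    have hxB := hB'sub hx
    rcases Finset.mem_sdiff.mp hxB with ⟨hxB2, hxW⟩
    rcases Finset.mem_union.mp (hBsub hxB2) with h | h
    · exact h
    · exact absurd h hxW
  refine ⟨B', hB'A, hB'card, fun e he hec => ?_⟩
  simp only [Finset.mem_filter]
  exact ⟨hBedge e (he.trans (hB'sub.trans Finset.sdiff_subset)) hec,
    (he.trans hB'A).trans hA⟩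
end

section
/- Let s > t ≥ 1, r ≥ 2 and l ≥ 1 be integers. Suppose F is an r-uniform hypergraph on s·l vertices which, for every integer q with 1 ≤ q ≤ s·l, has the (q, ⌈tq/s⌉)-property. Then the number of edges of F satisfies |F| ≥ (s/t)·C(tl, r). -/
/-- Hockey stick. -/
lemma hockey_stick (k : ℕ) : ∀ n : ℕ, ∑ v ∈ Finset.range n, v.choose k = n.choose (k+1) := by
  intro n
  induction n with
  | zero => simp
  | succ n ih =>
    rw [Finset.sum_range_succ, ih, Nat.choose_succ_succ']
    omega

/-- Grouping: sum over range (t*n) of f(m/t) equals t times sum of f. -/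
lemma sum_group (f : ℕ → ℕ) (t : ℕ) (ht : 0 < t) :
    ∀ n : ℕ, ∑ m ∈ Finset.range (t * n), f (m / t) = t * ∑ i ∈ Finset.range n, f i := by
  intro n
  induction n with
  | zero => simp
  | succ n ih =>
    have h : t * (n + 1) = t * n + t := by ring
    rw [h, Finset.sum_range_add, ih, Finset.sum_range_succ, Nat.mul_add]
    congr 1
    have : ∀ i ∈ Finset.range t, f ((t * n + i) / t) = f n := by
      intro i hi
      have hi' : i < t := Finset.mem_range.1 hi
      rw [Nat.mul_add_div ht, Nat.div_eq_of_lt hi', Nat.add_zero]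
    rw [Finset.sum_congr rfl this, Finset.sum_const, Finset.card_range, smul_eq_mul]

lemma count_edges (s t r l : ℕ) (hs : 0 < s) (ht : 0 < t) (hr : 2 ≤ r)
    (F : Finset (Finset (Fin (s * l))))
    (hprop : ∀ q : ℕ, 1 ≤ q → q ≤ s * l →
      HasLocalProperty F r q ⌈((t : ℝ) * q) / (s : ℝ)⌉₊) :
    ∀ W : Finset (Fin (s * l)),
      ∑ i ∈ Finset.range W.card, (⌈((t : ℝ) * (i + 1)) / (s : ℝ)⌉₊ - 1).choose (r - 1)
        ≤ (F.filter (· ⊆ W)).card := by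
  intro W
  induction W using Finset.strongInduction with
  | _ W ih =>
    rcases W.eq_empty_or_nonempty with hW | hW
    · simp [hW]
    · have hw1 : 1 ≤ W.card := Finset.card_pos.2 hW
      have hwle : W.card ≤ s * l := by
        have := Finset.card_le_univ W
        simpa using this
      obtain ⟨B, hBW, hBcard, hclique⟩ := hprop W.card hw1 hwle W rfl
      have hp1 : 1 ≤ ⌈((t : ℝ) * W.card) / (s : ℝ)⌉₊ := by
        rw [Nat.one_le_iff_ne_zero, ← Nat.pos_iff_ne_zero, Nat.ceil_pos]
        apply div_pos
        · have h1 : (0:ℝ) < t := by exact_mod_cast ht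
          have h2 : (0:ℝ) < W.card := by exact_mod_cast hw1
          positivity
        · exact_mod_cast hs
      obtain ⟨v, hvB⟩ := Finset.card_pos.1 (by rw [hBcard]; exact hp1)
      have hvW : v ∈ W := hBW hvB
      set U := W.erase v with hU
      have hUW : U ⊂ W := Finset.erase_ssubset hvW
      have hUcard : U.card = W.card - 1 := Finset.card_erase_of_mem hvW
      -- split the sum
      have hcard : W.card = (W.card - 1) + 1 := (Nat.succ_pred_eq_of_pos hw1).symm
      set w' := W.card - 1 with hw'
      -- edge sets
      set E1 := F.filter (· ⊆ U) with hE1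
      set E2 := F.filter (fun e => v ∈ e ∧ e ⊆ W) with hE2
      have hdisj : Disjoint E1 E2 := by
        rw [Finset.disjoint_left]
        intro e he1 he2
        rw [hE1, Finset.mem_filter] at he1
        rw [hE2, Finset.mem_filter] at he2
        exact (Finset.notMem_erase v W) (he1.2 he2.2.1)
      have hsub : E1 ∪ E2 ⊆ F.filter (· ⊆ W) := by
        intro e he
        rcases Finset.mem_union.1 he with h | h
        · rw [hE1, Finset.mem_filter] at h
          exact Finset.mem_filter.2 ⟨h.1, h.2.trans (Finset.erase_subset v W)⟩
        · rw [hE2, Finset.mem_filter] at h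
          exact Finset.mem_filter.2 ⟨h.1, h.2.2⟩
      have hcount : E1.card + E2.card ≤ (F.filter (· ⊆ W)).card := by
        rw [← Finset.card_union_of_disjoint hdisj]
        exact Finset.card_le_card hsub
      -- E2 lower bound
      have hE2ge : (⌈((t : ℝ) * W.card) / (s : ℝ)⌉₊ - 1).choose (r - 1) ≤ E2.card := by
        have hpows : ((B.erase v).powersetCard (r - 1)).card
            = (⌈((t : ℝ) * W.card) / (s : ℝ)⌉₊ - 1).choose (r - 1) := by
          rw [Finset.card_powersetCard, Finset.card_erase_of_mem hvB, hBcard]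
        rw [← hpows]
        apply Finset.card_le_card_of_injOn (fun e => insert v e)
        · intro e he
          rw [Finset.mem_coe, Finset.mem_powersetCard] at he
          obtain ⟨heB, hecard⟩ := he
          have hvne : v ∉ e := fun h => (Finset.notMem_erase v B) (heB h)
          have heB' : insert v e ⊆ B :=
            Finset.insert_subset hvB (heB.trans (Finset.erase_subset v B))
          have hcard' : (insert v e).card = r := by
            rw [Finset.card_insert_of_notMem hvne, hecard]
            omega
          rw [hE2, Finset.mem_coe, Finset.mem_filter]
          exact ⟨hclique _ heB' hcard', Finset.mem_insert_self v e,
            heB'.trans hBW⟩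
        · intro e1 h1 e2 h2 heq
          rw [Finset.mem_coe, Finset.mem_powersetCard] at h1 h2
          have hv1 : v ∉ e1 := fun h => (Finset.notMem_erase v B) (h1.1 h)
          have hv2 : v ∉ e2 := fun h => (Finset.notMem_erase v B) (h2.1 h)
          have := congrArg (fun (x : Finset (Fin (s*l))) => x.erase v) heq
          simpa [Finset.erase_insert hv1, Finset.erase_insert hv2] using this
      -- IH on U
      have hIH := ih U hUW
      rw [hUcard] at hIH
      -- combine
      have hcast : ((w' : ℝ) + 1) = (W.card : ℝ) := by
        rw [hcard]; push_cast; ring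
      calc ∑ i ∈ Finset.range W.card, (⌈((t : ℝ) * (i + 1)) / (s : ℝ)⌉₊ - 1).choose (r - 1)
          = ∑ i ∈ Finset.range w', (⌈((t : ℝ) * (i + 1)) / (s : ℝ)⌉₊ - 1).choose (r - 1)
            + (⌈((t : ℝ) * ((w' : ℝ) + 1)) / (s : ℝ)⌉₊ - 1).choose (r - 1) := by
            rw [hcard, Finset.sum_range_succ]
        _ ≤ E1.card + E2.card := by
            apply Nat.add_le_add hIH
            rw [hcast]
            exact hE2ge
        _ ≤ (F.filter (· ⊆ W)).card := hcount

/-- If an r-uniform hypergraph F on s·l vertices has the (q,⌈tq/s⌉)-property for all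
1 ≤ q ≤ s·l, then |F| ≥ (s/t)·C(tl,r). -/
theorem edges_ge_of_property (s t r l : ℕ) (hst : t < s) (ht : 1 ≤ t) (hr : 2 ≤ r)
    (hl : 1 ≤ l) (F : Finset (Finset (Fin (s * l)))) (hunif : ∀ e ∈ F, e.card = r)
    (hprop : ∀ q : ℕ, 1 ≤ q → q ≤ s * l →
      HasLocalProperty F r q ⌈((t : ℝ) * q) / (s : ℝ)⌉₊) :
    ((s : ℝ) / (t : ℝ)) * ((t * l).choose r : ℝ) ≤ (F.card : ℝ) := by
  have hs : 0 < s := lt_trans (by omega) hst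
  have ht0 : 0 < t := ht
  -- the vertex-removal induction bound
  have key := count_edges s t r l hs ht0 hr F hprop Finset.univ
  have huniv : (Finset.univ : Finset (Fin (s * l))).card = s * l := by
    simp
  rw [huniv] at key
  have hfilt : (F.filter (· ⊆ (Finset.univ : Finset (Fin (s * l))))).card = F.card := by
    congr 1
    apply Finset.filter_true_of_mem
    intro e _
    exact Finset.subset_univ e
  rw [hfilt] at key
  -- the numeric inequality : s * C(tl, r) ≤ t * (the sum)
  have hnum : s * (t * l).choose r
      ≤ t * ∑ i ∈ Finset.range (s * l), (⌈((t : ℝ) * (i + 1)) / (s : ℝ)⌉₊ - 1).choose (r - 1) := by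
    have hr1 : r - 1 + 1 = r := by omega
    have hleft : s * (t * l).choose r
        = ∑ m ∈ Finset.range (s * (t * l)), (m / s).choose (r - 1) := by
      have hhs : ∑ v ∈ Finset.range (t * l), v.choose (r - 1) = (t * l).choose r := by
        rw [hockey_stick (r - 1) (t * l), hr1]
      rw [← hhs]
      exact (sum_group (fun v => v.choose (r - 1)) s hs (t * l)).symm
    have hright : t * ∑ i ∈ Finset.range (s * l),
          (⌈((t : ℝ) * (i + 1)) / (s : ℝ)⌉₊ - 1).choose (r - 1)
        = ∑ m ∈ Finset.range (t * (s * l)),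
            (⌈((t : ℝ) * ((m / t : ℕ) + 1)) / (s : ℝ)⌉₊ - 1).choose (r - 1) := by
      rw [sum_group (fun i => (⌈((t : ℝ) * (i + 1)) / (s : ℝ)⌉₊ - 1).choose (r - 1)) t ht0 (s * l)]
    rw [hleft, hright]
    have hrange : s * (t * l) = t * (s * l) := by ring
    rw [hrange]
    apply Finset.sum_le_sum
    intro m _
    apply Nat.choose_le_choose
    -- m / s ≤ ⌈t (m/t + 1) / s⌉ - 1
    have hlt : m / s < ⌈((t : ℝ) * ((m / t : ℕ) + 1)) / (s : ℝ)⌉₊ := by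
      rw [Nat.lt_ceil]
      rw [lt_div_iff₀ (by exact_mod_cast hs : (0:ℝ) < s)]
      have hnat : (m / s) * s < t * (m / t + 1) := by
        have h1 : (m / s) * s ≤ m := Nat.div_mul_le_self m s
        have h2 : m < t * (m / t) + t := by
          conv_lhs => rw [← Nat.div_add_mod m t]
          exact Nat.add_lt_add_left (Nat.mod_lt m ht0) _
        calc (m / s) * s ≤ m := h1
          _ < t * (m / t) + t := h2
          _ = t * (m / t + 1) := by ring
      exact_mod_cast hnat
    omega
  -- conclude over the reals
  have htR : (0:ℝ) < t := by exact_mod_cast ht0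
  rw [div_mul_eq_mul_div, div_le_iff₀ htR]
  have hfin : s * (t * l).choose r ≤ t * F.card :=
    le_trans hnum (Nat.mul_le_mul_left t key)
  calc ((s:ℝ)) * ((t * l).choose r : ℝ) = ((s * (t * l).choose r : ℕ) : ℝ) := by push_cast; ring
    _ ≤ ((t * F.card : ℕ) : ℝ) := by exact_mod_cast hfin
    _ = (F.card : ℝ) * t := by push_cast; ring
end
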